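/- arXiv:2403.20206 — 6 statements merged into one kernel-verified Lean document; each statement's English description precedes it below -/
import Mathlib

section
/- Let B be a standard Brownian motion and fix α > 0 and 0 < τ < T. Then the expected value of the time-averaged mean squared displacement of the scaled Brownian motion B_α(t) = B(t^α) satisfies E[ (1/(T−τ)) ∫₀^{T−τ} (B((t+τ)^α) − B(t^α))² dt ] = (T^{α+1} − τ^{α+1} − (T−τ)^{α+1}) / ((α+1)(T−τ)). -/
open MeasureTheory ProbabilityTheory Filter Real

/-- `B` is a standard Brownian motion under `P`: it starts at `0` a.s., is jointly
measurable, its increments `B t - B s` (for `0 ≤ s ≤ t`) are Gaussian with mean `0`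
and variance `t - s`, and each increment is independent of the past
σ-algebra `σ(B u : 0 ≤ u ≤ s)`. -/
def IsStdBM {Ω : Type*} [MeasurableSpace Ω] (P : Measure Ω) (B : ℝ → Ω → ℝ) : Prop :=
  (∀ᵐ ω ∂P, B 0 ω = 0) ∧
  Measurable (Function.uncurry B) ∧
  (∀ s t : ℝ, 0 ≤ s → s ≤ t →
    P.map (fun ω => B t ω - B s ω) = gaussianReal 0 (Real.toNNReal (t - s))) ∧
  (∀ s t : ℝ, 0 ≤ s → s ≤ t →
    Indep (MeasurableSpace.comap (fun ω => B t ω - B s ω) inferInstance)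
      (⨆ u ∈ Set.Icc (0:ℝ) s, MeasurableSpace.comap (B u) inferInstance) P)

open scoped NNReal ENNReal
open Set

lemma rpow_two_eq (x : ℝ) : x ^ (2:ℝ) = x ^ 2 := by
  rw [show (2:ℝ) = ((2:ℕ):ℝ) by norm_num, Real.rpow_natCast]

lemma integral_sq_exp (b : ℝ) (hb : 0 < b) :
    ∫ x : ℝ, x ^ 2 * Real.exp (-b * x ^ 2) = b ^ (-(3:ℝ)/2) * (Real.sqrt π / 2) := by
  calc ∫ x : ℝ, x ^ 2 * Real.exp (-b * x ^ 2)
      = 2 * ∫ x in Ioi (0:ℝ), x ^ 2 * Real.exp (-b * x ^ 2) := by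
        have h1 := integral_comp_abs
          (f := fun y : ℝ => y ^ 2 * Real.exp (-b * y ^ 2))
        simpa [sq_abs] using h1
    _ = 2 * ∫ x in Ioi (0:ℝ), x ^ (2:ℝ) * Real.exp (-b * x ^ (2:ℝ)) := by
        simp_rw [rpow_two_eq]
    _ = 2 * (b ^ (-((2:ℝ) + 1) / 2) * (1 / 2) * Real.Gamma (((2:ℝ) + 1) / 2)) := by
        rw [integral_rpow_mul_exp_neg_mul_rpow (by norm_num) (by norm_num) hb]
    _ = b ^ (-(3:ℝ)/2) * (Real.sqrt π / 2) := by
        have : Real.Gamma (((2:ℝ)+1)/2) = Real.sqrt π / 2 := by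
          have h12 : ((2:ℝ)+1)/2 = 1/2 + 1 := by norm_num
          rw [h12, Real.Gamma_add_one (by norm_num), Real.Gamma_one_half_eq]
          ring
        rw [this, show -((2:ℝ) + 1) / 2 = -(3:ℝ)/2 by norm_num]; ring

lemma pdf_mul_sq (v : ℝ≥0) (hv : (0:ℝ) < v) (x : ℝ) :
    gaussianPDFReal 0 v x * x ^ 2
      = (Real.sqrt (2 * π * v))⁻¹ * (x ^ 2 * Real.exp (-(2 * (v:ℝ))⁻¹ * x ^ 2)) := by
  rw [gaussianPDFReal]
  have hx : -(x - 0) ^ 2 / (2 * (v:ℝ)) = -(2 * (v:ℝ))⁻¹ * x ^ 2 := by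
    ring
  rw [hx]
  ring

lemma sqrt_aux (v : ℝ≥0) (hv : (0:ℝ) < v) :
    (Real.sqrt (2 * π * v))⁻¹ * (((2 * (v:ℝ))⁻¹) ^ (-(3:ℝ)/2) * (Real.sqrt π / 2)) = v := by
  have h2v : (0:ℝ) < 2 * v := by positivity
  have h1 : ((2 * (v:ℝ))⁻¹) ^ (-(3:ℝ)/2) = (2 * (v:ℝ)) ^ ((3:ℝ)/2) := by
    rw [Real.inv_rpow h2v.le, ← Real.rpow_neg h2v.le]
    norm_num
  have h2 : (2 * (v:ℝ)) ^ ((3:ℝ)/2) = (2 * (v:ℝ)) * (2 * (v:ℝ)) ^ ((1:ℝ)/2) := by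
    rw [show (3:ℝ)/2 = 1 + 1/2 by norm_num, Real.rpow_add h2v, Real.rpow_one]
  have h3 : Real.sqrt (2 * π * v) = Real.sqrt π * (2 * (v:ℝ)) ^ ((1:ℝ)/2) := by
    rw [show 2 * π * (v:ℝ) = π * (2 * v) by ring, Real.sqrt_mul pi_pos.le,
      show √(2*(v:ℝ)) = (2*(v:ℝ))^((1:ℝ)/2) from Real.sqrt_eq_rpow _]
  rw [h1, h2, h3]
  have hπ : Real.sqrt π ≠ 0 := by positivity
  have hA : (2*(v:ℝ)) ^ ((1:ℝ)/2) ≠ 0 := by positivity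
  field_simp

lemma integral_sq_gaussianReal (v : ℝ≥0) : ∫ x, x ^ 2 ∂(gaussianReal 0 v) = v := by
  by_cases hv : v = 0
  · simp [hv]
  · have hv0 : (0:ℝ) < v := by positivity
    rw [gaussianReal_of_var_ne_zero _ hv]
    have hmeas : Measurable fun x => (gaussianPDFReal 0 v x).toNNReal :=
      (measurable_gaussianPDFReal 0 v).real_toNNReal
    rw [show gaussianPDF 0 v = fun x => ((gaussianPDFReal 0 v x).toNNReal : ℝ≥0∞) from rfl,
      integral_withDensity_eq_integral_smul hmeas]
    simp_rw [NNReal.smul_def, smul_eq_mul, Real.coe_toNNReal _ (gaussianPDFReal_nonneg 0 v _),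
      pdf_mul_sq v hv0]
    rw [integral_const_mul, integral_sq_exp _ (by positivity)]
    exact sqrt_aux v hv0

lemma integrable_sq_gaussianReal (v : ℝ≥0) :
    Integrable (fun x : ℝ => x ^ 2) (gaussianReal 0 v) := by
  by_cases hv : v = 0
  · rw [hv, gaussianReal_zero_var]
    refine ⟨by fun_prop, ?_⟩
    rw [HasFiniteIntegral, lintegral_dirac]
    simp
  · have hv0 : (0:ℝ) < v := by positivity
    rw [gaussianReal_of_var_ne_zero _ hv]
    have hmeas : Measurable fun x => (gaussianPDFReal 0 v x).toNNReal :=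
      (measurable_gaussianPDFReal 0 v).real_toNNReal
    rw [show gaussianPDF 0 v = fun x => ((gaussianPDFReal 0 v x).toNNReal : ℝ≥0∞) from rfl,
      integrable_withDensity_iff_integrable_smul hmeas]
    have : Integrable (fun x : ℝ =>
        (Real.sqrt (2 * π * v))⁻¹ * (x ^ 2 * Real.exp (-(2 * (v:ℝ))⁻¹ * x ^ 2))) := by
      refine Integrable.const_mul ?_ _
      have h := integrable_rpow_mul_exp_neg_mul_sq (b := (2 * (v:ℝ))⁻¹) (by positivity)
        (s := 2) (by norm_num)
      simpa [rpow_two_eq] using h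
    refine this.congr (Filter.Eventually.of_forall fun x => ?_)
    simp only [NNReal.smul_def, smul_eq_mul,
      Real.coe_toNNReal _ (gaussianPDFReal_nonneg 0 v x), pdf_mul_sq v hv0]

section BM

variable {Ω : Type*} [MeasurableSpace Ω] {P : Measure Ω} [IsProbabilityMeasure P]
  {B : ℝ → Ω → ℝ}


lemma meas_eval (hB : IsStdBM P B) (t : ℝ) : Measurable (B t) :=
  hB.2.1.comp (measurable_const.prodMk measurable_id)

lemma moment_sq (hB : IsStdBM P B) {s t : ℝ} (hs : 0 ≤ s) (hst : s ≤ t) :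
    ∫ ω, (B t ω - B s ω) ^ 2 ∂P = t - s := by
  have hm : Measurable fun ω => B t ω - B s ω := (meas_eval hB t).sub (meas_eval hB s)
  have := integral_map (μ := P) (φ := fun ω => B t ω - B s ω) (f := fun x : ℝ => x ^ 2)
    hm.aemeasurable (by fun_prop)
  rw [← this, hB.2.2.1 s t hs hst, integral_sq_gaussianReal,
    Real.coe_toNNReal _ (sub_nonneg.2 hst)]

lemma integrable_sq_inc (hB : IsStdBM P B) {s t : ℝ} (hs : 0 ≤ s) (hst : s ≤ t) :
    Integrable (fun ω => (B t ω - B s ω) ^ 2) P := by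
  have hm : Measurable fun ω => B t ω - B s ω := (meas_eval hB t).sub (meas_eval hB s)
  have h := (integrable_map_measure (μ := P) (f := fun ω => B t ω - B s ω)
    (g := fun x : ℝ => x ^ 2) (by fun_prop) hm.aemeasurable).mp
  rw [hB.2.2.1 s t hs hst] at h
  exact h (integrable_sq_gaussianReal _)

end BM


/-- The expected value of the TAMSD of scaled Brownian motion `B_α(t) = B(t^α)`:
`E[ (1/(T−τ)) ∫₀^{T−τ} (B((t+τ)^α) − B(t^α))² dt ]
  = (T^{α+1} − τ^{α+1} − (T−τ)^{α+1}) / ((α+1)(T−τ))`. -/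
theorem sbm_tamsd_expectation {Ω : Type*} [MeasurableSpace Ω] (P : Measure Ω)
    [IsProbabilityMeasure P] (B : ℝ → Ω → ℝ) (hB : IsStdBM P B)
    (α τ T : ℝ) (hα : 0 < α) (hτ : 0 < τ) (hτT : τ < T) :
    ∫ ω, (1 / (T - τ)) *
        (∫ t in (0:ℝ)..(T - τ), (B ((t + τ) ^ α) ω - B (t ^ α) ω) ^ 2) ∂P
      = (T ^ (α + 1) - τ ^ (α + 1) - (T - τ) ^ (α + 1)) / ((α + 1) * (T - τ)) := by
  have hc : 0 < T - τ := sub_pos.2 hτT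
  have hcont : Continuous fun t : ℝ => t ^ α := Real.continuous_rpow_const hα.le
  set f : ℝ → Ω → ℝ := fun t ω => (B ((t + τ) ^ α) ω - B (t ^ α) ω) ^ 2 with hf
  have hpt : ∀ t : ℝ, 0 ≤ t → 0 ≤ t ^ α ∧ t ^ α ≤ (t + τ) ^ α := fun t ht =>
    ⟨Real.rpow_nonneg ht α, Real.rpow_le_rpow ht (by linarith) hα.le⟩
  have hfm : Measurable (Function.uncurry f) := by
    have h1 : Measurable fun p : ℝ × Ω => B ((p.1 + τ) ^ α) p.2 :=
      hB.2.1.comp ((hcont.measurable.comp (measurable_fst.add_const τ)).prodMk measurable_snd)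
    have h2 : Measurable fun p : ℝ × Ω => B (p.1 ^ α) p.2 :=
      hB.2.1.comp ((hcont.measurable.comp measurable_fst).prodMk measurable_snd)
    exact (h1.sub h2).pow_const 2
  have hint : Integrable (Function.uncurry f)
      ((volume.restrict (Set.Ioc 0 (T - τ))).prod P) := by
    rw [integrable_prod_iff hfm.aestronglyMeasurable]
    constructor
    · refine (ae_restrict_iff' measurableSet_Ioc).2
        (Filter.Eventually.of_forall fun t ht => ?_)
      exact integrable_sq_inc hB (hpt t ht.1.le).1 (hpt t ht.1.le).2
    · have hcont2 : Continuous fun t : ℝ => (t + τ) ^ α - t ^ α :=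
        (hcont.comp (continuous_id.add continuous_const)).sub hcont
      refine Integrable.congr hcont2.integrableOn_Ioc ?_
      refine (ae_restrict_iff' measurableSet_Ioc).2
        (Filter.Eventually.of_forall fun t ht => ?_)
      have hmom := moment_sq hB (hpt t ht.1.le).1 (hpt t ht.1.le).2
      calc (t + τ) ^ α - t ^ α = ∫ ω, f t ω ∂P := hmom.symm
        _ = ∫ ω, ‖Function.uncurry f (t, ω)‖ ∂P := by
            refine integral_congr_ae (Filter.Eventually.of_forall fun ω => ?_)
            exact (Real.norm_of_nonneg (sq_nonneg _)).symm
  calc ∫ ω, (1 / (T - τ)) * (∫ t in (0:ℝ)..(T - τ), f t ω) ∂P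
      = (1 / (T - τ)) * ∫ ω, (∫ t in (0:ℝ)..(T - τ), f t ω) ∂P := integral_const_mul _ _
    _ = (1 / (T - τ)) * ∫ ω, (∫ t in Set.Ioc 0 (T - τ), f t ω) ∂P := by
        congr 1
        refine integral_congr_ae (Filter.Eventually.of_forall fun ω => ?_)
        exact intervalIntegral.integral_of_le hc.le
    _ = (1 / (T - τ)) * ∫ t in Set.Ioc 0 (T - τ), (∫ ω, f t ω ∂P) := by
        rw [MeasureTheory.integral_integral_swap hint]
    _ = (1 / (T - τ)) * ∫ t in Set.Ioc 0 (T - τ), ((t + τ) ^ α - t ^ α) := by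
        congr 1
        refine setIntegral_congr_fun measurableSet_Ioc fun t ht => ?_
        exact moment_sq hB (hpt t ht.1.le).1 (hpt t ht.1.le).2
    _ = (1 / (T - τ)) * ∫ t in (0:ℝ)..(T - τ), ((t + τ) ^ α - t ^ α) := by
        rw [intervalIntegral.integral_of_le hc.le]
    _ = (T ^ (α + 1) - τ ^ (α + 1) - (T - τ) ^ (α + 1)) / ((α + 1) * (T - τ)) := by
        have hIc1 : IntervalIntegrable (fun t : ℝ => (t + τ) ^ α) volume 0 (T - τ) :=
          ((hcont.comp (continuous_id.add continuous_const)).intervalIntegrable _ _)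
        have hIc2 : IntervalIntegrable (fun t : ℝ => t ^ α) volume 0 (T - τ) :=
          hcont.intervalIntegrable _ _
        rw [intervalIntegral.integral_sub hIc1 hIc2]
        have e1 : (∫ t in (0:ℝ)..(T - τ), (t + τ) ^ α)
            = (T ^ (α + 1) - τ ^ (α + 1)) / (α + 1) := by
          rw [intervalIntegral.integral_comp_add_right (fun u : ℝ => u ^ α) τ, zero_add,
            show T - τ + τ = T by ring, integral_rpow (Or.inl (by linarith))]
        have e2 : (∫ t in (0:ℝ)..(T - τ), t ^ α) = (T - τ) ^ (α + 1) / (α + 1) := by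
          rw [integral_rpow (Or.inl (by linarith)),
            Real.zero_rpow (by positivity), sub_zero]
        rw [e1, e2, div_sub_div_same, one_div_mul_eq_div, div_div]
end

section
/- Let B be a standard Brownian motion, K > 0, and A : Ω → ℝ a random variable with values in (0, K), independent of B, whose law has a continuous Lebesgue density f_A supported in (0, K). Let X(t)(ω) = B(t^{A(ω)})(ω) be the SBMRE and fix λ > 0. Then the stochastic exponential Y(t) = exp( λ X(t) − (λ²/2) t^A ) is a martingale with respect to the filtration G_t = σ( σ(A) ∪ σ(X(u) : u ≤ t) ); in particular Y(t) is integrable for all t ≥ 0 and E[Y(t) | G_s] = Y(s) almost surely for all 0 ≤ s ≤ t. -/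
open MeasureTheory ProbabilityTheory Filter Real

/-- The filtration `G_t = σ( σ(A) ∪ σ(X u : 0 ≤ u ≤ t) )`. -/
def sbmreFiltration {Ω : Type*} (A : Ω → ℝ) (X : ℝ → Ω → ℝ) (t : ℝ) :
    MeasurableSpace Ω :=
  MeasurableSpace.comap A inferInstance ⊔
    ⨆ u ∈ Set.Icc (0:ℝ) t, MeasurableSpace.comap (X u) inferInstance

open scoped NNReal ENNReal
namespace SBMREAux

lemma gauss_exp_lintegral (v : ℝ≥0) (r : ℝ) :
    ∫⁻ x, ENNReal.ofReal (rexp (r * x)) ∂(gaussianReal 0 v) =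
      ENNReal.ofReal (rexp ((v : ℝ) * r ^ 2 / 2)) := by
  have hmeas : Measurable fun x : ℝ => ENNReal.ofReal (rexp (r * x)) := by fun_prop
  rcases eq_or_ne v 0 with hv | hv
  · subst hv
    rw [gaussianReal_zero_var, lintegral_dirac' _ hmeas]
    simp
  · have hv' : (0:ℝ) < v := by
      have := (pos_iff_ne_zero (a := v)).2 hv
      exact_mod_cast this
    rw [gaussianReal_of_var_ne_zero _ hv,
      lintegral_withDensity_eq_lintegral_mul _ (measurable_gaussianPDF _ _)
        hmeas]
    have key : ∀ x : ℝ, (gaussianPDF 0 v x * ENNReal.ofReal (rexp (r * x)))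
        = ENNReal.ofReal (rexp ((v:ℝ) * r ^ 2 / 2)) * gaussianPDF ((v:ℝ) * r) v x := by
      intro x
      simp only [gaussianPDF]
      rw [← ENNReal.ofReal_mul (gaussianPDFReal_nonneg _ _ _),
        ← ENNReal.ofReal_mul (exp_nonneg _)]
      congr 1
      simp only [gaussianPDFReal]
      have harg : -(x - 0) ^ 2 / (2 * (v:ℝ)) + r * x
          = (v:ℝ) * r ^ 2 / 2 + -(x - (v:ℝ) * r) ^ 2 / (2 * (v:ℝ)) := by
        field_simp
        ring
      calc (√(2 * π * (v:ℝ)))⁻¹ * rexp (-(x - 0) ^ 2 / (2 * (v:ℝ))) * rexp (r * x)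
          = (√(2 * π * (v:ℝ)))⁻¹ * rexp (-(x - 0) ^ 2 / (2 * (v:ℝ)) + r * x) := by
            rw [mul_assoc, ← Real.exp_add]
        _ = rexp ((v:ℝ) * r ^ 2 / 2) *
            ((√(2 * π * (v:ℝ)))⁻¹ * rexp (-(x - (v:ℝ) * r) ^ 2 / (2 * (v:ℝ)))) := by
            rw [harg, Real.exp_add]; ring
    simp only [Pi.mul_apply] at key ⊢
    simp_rw [key]
    rw [lintegral_const_mul _ (measurable_gaussianPDF _ _), lintegral_gaussianPDF_eq_one _ hv,
      mul_one]


lemma measurable_const_rpow {u : ℝ} (hu : 0 ≤ u) : Measurable fun y : ℝ => u ^ y := by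
  rcases eq_or_lt_of_le hu with h | h
  · have he : (fun y : ℝ => u ^ y) = fun y => Set.indicator {(0:ℝ)} (fun _ => (1:ℝ)) y := by
      funext y
      by_cases hy : y = 0
      · subst hy; simp [← h, Real.rpow_zero]
      · rw [← h, Real.zero_rpow hy, Set.indicator_of_notMem (by simpa using hy)]
    rw [he]
    exact measurable_const.indicator (measurableSet_singleton 0)
  · have he : (fun y : ℝ => u ^ y) = fun y => Real.exp (Real.log u * y) := by
      funext y; rw [Real.rpow_def_of_pos h]
    rw [he]
    exact (measurable_id.const_mul _).exp

lemma meas_B_rpow {Ω : Type*} {mΩ : MeasurableSpace Ω} (B : ℝ → Ω → ℝ)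
    (hBv : ∀ v : ℝ, 0 ≤ v → Measurable (B v))
    (hcont : ∀ ω, Continuous fun t => B t ω) {u : ℝ} (hu : 0 ≤ u) :
    Measurable fun p : ℝ × Ω => B (u ^ p.1) p.2 := by
  have key : ∀ p : ℝ × Ω, Tendsto (fun n : ℕ => B ((⌈u ^ p.1 * 2 ^ n⌉₊ : ℝ) / 2 ^ n) p.2)
      atTop (nhds (B (u ^ p.1) p.2)) := by
    intro p
    set c := u ^ p.1 with hc
    have h0 : 0 ≤ c := Real.rpow_nonneg hu _
    have hc2 : ∀ n : ℕ, (0:ℝ) < 2 ^ n := fun n => by positivity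
    have hlo : ∀ n : ℕ, c ≤ (⌈c * 2 ^ n⌉₊ : ℝ) / 2 ^ n := by
      intro n
      rw [le_div_iff₀ (hc2 n)]
      exact Nat.le_ceil _
    have hhi : ∀ n : ℕ, (⌈c * 2 ^ n⌉₊ : ℝ) / 2 ^ n ≤ c + ((2:ℝ) ^ n)⁻¹ := by
      intro n
      rw [div_le_iff₀ (hc2 n)]
      have := (Nat.ceil_lt_add_one (by positivity : (0:ℝ) ≤ c * 2 ^ n)).le
      calc (⌈c * 2 ^ n⌉₊ : ℝ) ≤ c * 2 ^ n + 1 := this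
        _ = (c + ((2:ℝ) ^ n)⁻¹) * 2 ^ n := by field_simp
    have htend : Tendsto (fun n : ℕ => (⌈c * 2 ^ n⌉₊ : ℝ) / 2 ^ n) atTop (nhds c) := by
      have h1 : Tendsto (fun n : ℕ => c + ((2:ℝ) ^ n)⁻¹) atTop (nhds (c + 0)) :=
        tendsto_const_nhds.add
          (tendsto_inv_atTop_zero.comp (tendsto_pow_atTop_atTop_of_one_lt one_lt_two))
      rw [add_zero] at h1
      exact tendsto_of_tendsto_of_tendsto_of_le_of_le tendsto_const_nhds h1 hlo hhi
    exact ((hcont p.2).tendsto c).comp htend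
  refine measurable_of_tendsto_metrizable (fun n => ?_) (tendsto_pi_nhds.mpr key)
  have h1 : Measurable fun a : ℝ => (⌈u ^ a * 2 ^ n⌉₊ : ℕ) :=
    Nat.measurable_ceil.comp ((measurable_const_rpow hu).mul_const _)
  have h2 : Measurable fun q : Ω × ℕ => B ((q.2 : ℝ) / 2 ^ n) q.1 :=
    measurable_from_prod_countable_left fun k => hBv ((k:ℝ) / 2 ^ n) (by positivity)
  exact h2.comp (measurable_snd.prodMk (h1.comp measurable_fst))

lemma meas_Z {Ω : Type*} {mΩ : MeasurableSpace Ω} (B : ℝ → Ω → ℝ)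
    (hBv : ∀ v : ℝ, 0 ≤ v → Measurable (B v))
    (hcont : ∀ ω, Continuous fun t => B t ω) {r : ℝ} (hr : 0 ≤ r) (l c : ℝ) :
    Measurable fun p : ℝ × Ω => ENNReal.ofReal (rexp (l * B (r ^ p.1) p.2 - c * r ^ p.1)) := by
  have h1 : Measurable fun p : ℝ × Ω => r ^ p.1 := (measurable_const_rpow hr).comp measurable_fst
  exact (((meas_B_rpow B hBv hcont hr).const_mul l).sub (h1.const_mul c)).exp.ennreal_ofReal

lemma meas_ind_fst {Ω : Type*} {mΩ : MeasurableSpace Ω} {T : Set ℝ} (hT : MeasurableSet T) :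
    Measurable fun p : ℝ × Ω => T.indicator (fun _ => (1:ℝ≥0∞)) p.1 :=
  (measurable_const.indicator hT).comp measurable_fst

lemma meas_ind_B {Ω : Type*} {mΩ : MeasurableSpace Ω} (B : ℝ → Ω → ℝ)
    (hBv : ∀ v : ℝ, 0 ≤ v → Measurable (B v))
    (hcont : ∀ ω, Continuous fun t => B t ω) {u : ℝ} (hu : 0 ≤ u)
    {T : Set ℝ} (hT : MeasurableSet T) :
    Measurable fun p : ℝ × Ω => T.indicator (fun _ => (1:ℝ≥0∞)) (B (u ^ p.1) p.2) :=
  (measurable_const.indicator hT).comp (meas_B_rpow B hBv hcont hu)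

lemma indep_fubini {Ω : Type*} {m0 : MeasurableSpace Ω} {Ω' : Type*} {mb' : MeasurableSpace Ω'}
    (P : Measure Ω) [IsProbabilityMeasure P]
    (j : Ω → Ω') (hj : Measurable j) (A : Ω → ℝ) (hA : Measurable A)
    (hindep : ∀ (S : Set ℝ) (T : Set Ω'), MeasurableSet S → MeasurableSet T →
      P (A ⁻¹' S ∩ j ⁻¹' T) = P (A ⁻¹' S) * P (j ⁻¹' T))
    (F : ℝ × Ω' → ℝ≥0∞) (hF : Measurable F) :
    ∫⁻ ω, F (A ω, j ω) ∂P = ∫⁻ a, ∫⁻ ω', F (a, ω') ∂(P.map j) ∂(P.map A) := by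
  haveI : IsProbabilityMeasure (P.map A) := Measure.isProbabilityMeasure_map hA.aemeasurable
  haveI : IsProbabilityMeasure (P.map j) := Measure.isProbabilityMeasure_map hj.aemeasurable
  have hΦ : Measurable fun ω => (A ω, j ω) := hA.prodMk hj
  have hprod : P.map (fun ω => (A ω, j ω)) = (P.map A).prod (P.map j) := by
    refine (Measure.prod_eq fun s t hs ht => ?_).symm
    rw [Measure.map_apply hΦ (hs.prod ht), Measure.map_apply hA hs, Measure.map_apply hj ht]
    rw [Set.mk_preimage_prod]
    exact hindep s t hs ht
  calc ∫⁻ ω, F (A ω, j ω) ∂P = ∫⁻ p, F p ∂(P.map fun ω => (A ω, j ω)) :=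
        (lintegral_map hF hΦ).symm
    _ = ∫⁻ a, ∫⁻ ω', F (a, ω') ∂(P.map j) ∂(P.map A) := by
        rw [hprod]; exact lintegral_prod F hF.aemeasurable


lemma bm_step {Ω : Type*} (mF : MeasurableSpace Ω) [m0 : MeasurableSpace Ω]
    {P : Measure Ω} [IsProbabilityMeasure P]
    (B : ℝ → Ω → ℝ) (hBu : ∀ u : ℝ, Measurable (B u))
    (hBlaw : ∀ s t : ℝ, 0 ≤ s → s ≤ t →
      P.map (fun ω => B t ω - B s ω) = gaussianReal 0 (Real.toNNReal (t - s)))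
    (l : ℝ) {s t : ℝ} (hs : 0 ≤ s) (hst : s ≤ t)
    (hFle : mF ≤ m0) (hBsF : Measurable[mF] (B s))
    (hFind : Indep (MeasurableSpace.comap (fun ω => B t ω - B s ω) inferInstance) mF P)
    (g : Ω → ℝ≥0∞) (hg : Measurable[mF] g) :
    ∫⁻ ω, g ω * ENNReal.ofReal (rexp (l * B t ω - l ^ 2 / 2 * t)) ∂P
      = ∫⁻ ω, g ω * ENNReal.ofReal (rexp (l * B s ω - l ^ 2 / 2 * s)) ∂P := by
  have hinc_meas : Measurable fun ω => B t ω - B s ω := (hBu t).sub (hBu s)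
  have hφF : Measurable[mF] fun ω => g ω * ENNReal.ofReal (rexp (l * B s ω - l ^ 2 / 2 * s)) :=
    hg.mul (((hBsF.const_mul l).sub measurable_const).exp.ennreal_ofReal)
  have hψi : Measurable[MeasurableSpace.comap (fun ω => B t ω - B s ω) inferInstance]
      fun ω => ENNReal.ofReal (rexp (l * (B t ω - B s ω) - l ^ 2 / 2 * (t - s))) := by
    have hid : Measurable[MeasurableSpace.comap (fun ω => B t ω - B s ω) inferInstance]
        fun ω => B t ω - B s ω := Measurable.of_comap_le le_rfl
    exact ((hid.const_mul l).sub measurable_const).exp.ennreal_ofReal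
  have hpoint : ∀ ω, g ω * ENNReal.ofReal (rexp (l * B t ω - l ^ 2 / 2 * t))
      = (g ω * ENNReal.ofReal (rexp (l * B s ω - l ^ 2 / 2 * s)))
        * ENNReal.ofReal (rexp (l * (B t ω - B s ω) - l ^ 2 / 2 * (t - s))) := by
    intro ω
    have : rexp (l * B t ω - l ^ 2 / 2 * t)
        = rexp (l * B s ω - l ^ 2 / 2 * s) * rexp (l * (B t ω - B s ω) - l ^ 2 / 2 * (t - s)) := by
      rw [← Real.exp_add]; congr 1; ring
    rw [this, ENNReal.ofReal_mul (exp_nonneg _), ← mul_assoc]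
  have hmx : Measurable fun x : ℝ => ENNReal.ofReal (rexp (l * x - l ^ 2 / 2 * (t - s))) := by
    fun_prop
  have hmx2 : Measurable fun x : ℝ => ENNReal.ofReal (rexp (l * x)) := by fun_prop
  have hψ1 : ∫⁻ ω, ENNReal.ofReal (rexp (l * (B t ω - B s ω) - l ^ 2 / 2 * (t - s))) ∂P = 1 := by
    calc ∫⁻ ω, ENNReal.ofReal (rexp (l * (B t ω - B s ω) - l ^ 2 / 2 * (t - s))) ∂P
        = ∫⁻ x, ENNReal.ofReal (rexp (l * x - l ^ 2 / 2 * (t - s)))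
            ∂(P.map (fun ω => B t ω - B s ω)) := by
          rw [lintegral_map hmx hinc_meas]
      _ = ∫⁻ x, ENNReal.ofReal (rexp (l * x)) * ENNReal.ofReal (rexp (- (l ^ 2 / 2 * (t - s))))
            ∂(gaussianReal 0 (Real.toNNReal (t - s))) := by
          rw [hBlaw s t hs hst]
          congr 1; funext x
          rw [← ENNReal.ofReal_mul (exp_nonneg _), ← Real.exp_add, sub_eq_add_neg]
      _ = ENNReal.ofReal (rexp ((Real.toNNReal (t - s) : ℝ) * l ^ 2 / 2))
            * ENNReal.ofReal (rexp (- (l ^ 2 / 2 * (t - s)))) := by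
          rw [lintegral_mul_const _ hmx2, gauss_exp_lintegral _ l]
      _ = 1 := by
          rw [← ENNReal.ofReal_mul (exp_nonneg _), ← Real.exp_add,
            Real.coe_toNNReal _ (by linarith)]
          rw [show (t - s) * l ^ 2 / 2 + -(l ^ 2 / 2 * (t - s)) = 0 by ring,
            Real.exp_zero, ENNReal.ofReal_one]
  calc ∫⁻ ω, g ω * ENNReal.ofReal (rexp (l * B t ω - l ^ 2 / 2 * t)) ∂P
      = ∫⁻ ω, (g ω * ENNReal.ofReal (rexp (l * B s ω - l ^ 2 / 2 * s)))
          * ENNReal.ofReal (rexp (l * (B t ω - B s ω) - l ^ 2 / 2 * (t - s))) ∂P := by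
        simp_rw [hpoint]
    _ = (∫⁻ ω, g ω * ENNReal.ofReal (rexp (l * B s ω - l ^ 2 / 2 * s)) ∂P)
        * ∫⁻ ω, ENNReal.ofReal (rexp (l * (B t ω - B s ω) - l ^ 2 / 2 * (t - s))) ∂P :=
        lintegral_mul_eq_lintegral_mul_lintegral_of_independent_measurableSpace
          hFle hinc_meas.comap_le hFind.symm hφF hψi
    _ = ∫⁻ ω, g ω * ENNReal.ofReal (rexp (l * B s ω - l ^ 2 / 2 * s)) ∂P := by
        rw [hψ1, mul_one]


/-- The σ-algebra generated by the Brownian motion at nonnegative times. -/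
def bigB {Ω : Type*} [MeasurableSpace Ω] (B : ℝ → Ω → ℝ) : MeasurableSpace Ω :=
  ⨆ u ∈ Set.Ici (0:ℝ), MeasurableSpace.comap (B u) inferInstance


end SBMREAux

open SBMREAux

/-- The stochastic exponential `Y(t) = exp(λ X(t) − (λ²/2) t^A)` of the SBMRE
`X(t) = B(t^A)` (where `A` has a continuous Lebesgue density supported in `(0,K)`)
is a martingale with respect to `G_t = σ(σ(A) ∪ σ(X u : u ≤ t))`: `Y(t)` is
integrable for all `t ≥ 0` and `E[Y(t) | G_s] = Y(s)` a.s. for `0 ≤ s ≤ t`. -/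
theorem sbmre_stochastic_exponential_martingale {Ω : Type*} [MeasurableSpace Ω]
    (P : Measure Ω) [IsProbabilityMeasure P] (B : ℝ → Ω → ℝ) (hB : IsStdBM P B)
    (hcont : ∀ ω, Continuous fun t => B t ω)
    (K : ℝ) (hK : 0 < K) (A : Ω → ℝ) (hA : Measurable A)
    (hrange : ∀ ω, A ω ∈ Set.Ioo 0 K)
    (hindep : Indep (MeasurableSpace.comap A inferInstance)
      (⨆ u ∈ Set.Ici (0:ℝ), MeasurableSpace.comap (B u) inferInstance) P)
    (fA : ℝ → ℝ) (hfAcont : Continuous fA)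
    (hlawA : P.map A = volume.withDensity (fun a => ENNReal.ofReal (fA a)))
    (hsupp : ∀ a, a ∉ Set.Ioo 0 K → fA a = 0)
    (l : ℝ) (hl : 0 < l) :
    (∀ t : ℝ, 0 ≤ t →
      Integrable (fun ω => Real.exp (l * B (t ^ A ω) ω - l ^ 2 / 2 * t ^ A ω)) P) ∧
    (∀ s t : ℝ, 0 ≤ s → s ≤ t →
      P[(fun ω => Real.exp (l * B (t ^ A ω) ω - l ^ 2 / 2 * t ^ A ω)) |
          sbmreFiltration A (fun u ω => B (u ^ A ω) ω) s]
        =ᵐ[P] fun ω => Real.exp (l * B (s ^ A ω) ω - l ^ 2 / 2 * s ^ A ω)) := by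
  obtain ⟨hB0, hBjm, hBlaw, hBinc⟩ := hB
  have hBu : ∀ u : ℝ, Measurable (B u) := fun u =>
    hBjm.comp (measurable_const.prodMk measurable_id)
  have h𝓑le : bigB B ≤ ‹MeasurableSpace Ω› := iSup₂_le fun u _ => (hBu u).comap_le
  have hBu𝓑 : ∀ v : ℝ, 0 ≤ v → Measurable[bigB B] (B v) := fun v hv =>
    Measurable.of_comap_le (le_iSup₂ (f := fun u (_ : u ∈ Set.Ici (0:ℝ)) =>
      MeasurableSpace.comap (B u) inferInstance) v hv)
  haveI : IsProbabilityMeasure (P.map A) := Measure.isProbabilityMeasure_map hA.aemeasurable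
  have hμA_supp : ∀ᵐ a ∂(P.map A), a ∈ Set.Ioo 0 K :=
    (MeasureTheory.ae_map_iff hA.aemeasurable measurableSet_Ioo).2 (ae_of_all _ hrange)
  -- the independence-Fubini identity
  have hfub : ∀ F : ℝ × Ω → ℝ≥0∞, Measurable[@Prod.instMeasurableSpace ℝ Ω _ (bigB B)] F →
      ∫⁻ ω, F (A ω, ω) ∂P = ∫⁻ a, ∫⁻ ω, F (a, ω) ∂P ∂(P.map A) := by
    intro F hF
    have hInd : ∀ (S : Set ℝ) (T : Set Ω), MeasurableSet S → MeasurableSet[bigB B] T →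
        P (A ⁻¹' S ∩ id ⁻¹' T) = P (A ⁻¹' S) * P (id ⁻¹' T) := by
      intro S T hS hT
      simpa using (Indep_iff _ _ P).1 hindep (A ⁻¹' S) T ⟨S, hS, rfl⟩ hT
    have h := indep_fubini (mb' := bigB B) P id (measurable_id'' h𝓑le) A hA hInd F hF
    refine h.trans (lintegral_congr fun a => ?_)
    exact @lintegral_map Ω Ω _ (bigB B) P _ _ (hF.comp (measurable_prodMk_left (β := Ω) (mβ := bigB B) (x := a)))
      (measurable_id'' h𝓑le)
  -- the basic exponential-martingale step for the time-changed BM, fixed exponent a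
  have hstep : ∀ a ∈ Set.Ioo (0:ℝ) K, ∀ s t : ℝ, 0 ≤ s → s ≤ t →
      ∀ g : Ω → ℝ≥0∞,
        Measurable[⨆ u ∈ Set.Icc (0:ℝ) (s ^ a), MeasurableSpace.comap (B u) inferInstance] g →
      ∫⁻ ω, g ω * ENNReal.ofReal (rexp (l * B (t ^ a) ω - l ^ 2 / 2 * t ^ a)) ∂P
        = ∫⁻ ω, g ω * ENNReal.ofReal (rexp (l * B (s ^ a) ω - l ^ 2 / 2 * s ^ a)) ∂P := by
    intro a ha s t hs hst g hg
    have hsa : (0:ℝ) ≤ s ^ a := Real.rpow_nonneg hs a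
    have hta : s ^ a ≤ t ^ a := Real.rpow_le_rpow hs hst ha.1.le
    exact bm_step _ B hBu hBlaw l hsa hta
      (iSup₂_le fun u _ => (hBu u).comap_le)
      (Measurable.of_comap_le (le_iSup₂ (f := fun u (_ : u ∈ Set.Icc (0:ℝ) (s ^ a)) =>
        MeasurableSpace.comap (B u) inferInstance) (s ^ a) ⟨hsa, le_rfl⟩))
      (hBinc (s ^ a) (t ^ a) hsa hta) g hg
  -- total mass of the stochastic exponential
  have hZlint : ∀ r : ℝ, 0 ≤ r →
      ∫⁻ ω, ENNReal.ofReal (rexp (l * B (r ^ A ω) ω - l ^ 2 / 2 * r ^ A ω)) ∂P = 1 := by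
    intro r hr
    have h := hfub (fun p => ENNReal.ofReal (rexp (l * B (r ^ p.1) p.2 - l ^ 2 / 2 * r ^ p.1)))
      (meas_Z (mΩ := bigB B) B hBu𝓑 hcont hr l (l ^ 2 / 2))
    refine h.trans ?_
    have hinner : ∀ a : ℝ,
        ∫⁻ ω, ENNReal.ofReal (rexp (l * B (r ^ a) ω - l ^ 2 / 2 * r ^ a)) ∂P = 1 := by
      intro a
      have hra : (0:ℝ) ≤ r ^ a := Real.rpow_nonneg hr a
      have h1 := bm_step (⨆ u ∈ Set.Icc (0:ℝ) 0, MeasurableSpace.comap (B u) inferInstance)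
        B hBu hBlaw l (le_refl (0:ℝ)) hra
        (iSup₂_le fun u _ => (hBu u).comap_le)
        (Measurable.of_comap_le (le_iSup₂ (f := fun u (_ : u ∈ Set.Icc (0:ℝ) 0) =>
          MeasurableSpace.comap (B u) inferInstance) 0 ⟨le_rfl, le_rfl⟩))
        (hBinc 0 (r ^ a) le_rfl hra) (fun _ => 1) measurable_const
      simp_rw [one_mul] at h1
      refine h1.trans ?_
      have : ∀ᵐ ω ∂P, ENNReal.ofReal (rexp (l * B 0 ω - l ^ 2 / 2 * 0)) = 1 := by
        filter_upwards [hB0] with ω h0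
        rw [h0]
        norm_num
      rw [lintegral_congr_ae this, lintegral_one, measure_univ]
    rw [lintegral_congr fun a => hinner a, lintegral_one, measure_univ]
  -- integrability
  have hYmeas : ∀ r : ℝ, 0 ≤ r →
      Measurable fun ω => rexp (l * B (r ^ A ω) ω - l ^ 2 / 2 * r ^ A ω) := by
    intro r hr
    have hXm : Measurable fun ω => B (r ^ A ω) ω :=
      hBjm.comp ((((measurable_const_rpow hr).comp hA)).prodMk measurable_id)
    exact ((hXm.const_mul l).sub (((measurable_const_rpow hr).comp hA).const_mul _)).exp
  have hInt : ∀ r : ℝ, 0 ≤ r →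
      Integrable (fun ω => rexp (l * B (r ^ A ω) ω - l ^ 2 / 2 * r ^ A ω)) P := by
    intro r hr
    refine ⟨(hYmeas r hr).aestronglyMeasurable, ?_⟩
    rw [hasFiniteIntegral_iff_ofReal (ae_of_all _ fun ω => (exp_nonneg _))]
    rw [hZlint r hr]
    exact ENNReal.one_lt_top
  refine ⟨fun t ht => hInt t ht, ?_⟩
  intro s t hs hst
  have hst0 : (0:ℝ) ≤ t := hs.trans hst
  have hXm : ∀ u : ℝ, 0 ≤ u → Measurable fun ω => B (u ^ A ω) ω := fun u hu =>
    hBjm.comp ((((measurable_const_rpow hu).comp hA)).prodMk measurable_id)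
  have hm : sbmreFiltration A (fun u ω => B (u ^ A ω) ω) s ≤ ‹MeasurableSpace Ω› := by
    refine sup_le hA.comap_le (iSup₂_le fun u hu => ?_)
    exact (hXm u hu.1).comap_le
  haveI : IsFiniteMeasure (P.trim hm) :=
    ⟨by rw [trim_measurableSet_eq hm MeasurableSet.univ]; exact measure_lt_top P _⟩
  have hAm : Measurable[sbmreFiltration A (fun u ω => B (u ^ A ω) ω) s] A :=
    Measurable.of_comap_le le_sup_left
  have hXsm : Measurable[sbmreFiltration A (fun u ω => B (u ^ A ω) ω) s]
      fun ω => B (s ^ A ω) ω := by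
    refine Measurable.of_comap_le (le_trans ?_ le_sup_right)
    exact le_iSup₂ (f := fun u (_ : u ∈ Set.Icc (0:ℝ) s) =>
      MeasurableSpace.comap (fun ω => B (u ^ A ω) ω) inferInstance) s ⟨hs, le_rfl⟩
  have hYsm : Measurable[sbmreFiltration A (fun u ω => B (u ^ A ω) ω) s]
      fun ω => rexp (l * B (s ^ A ω) ω - l ^ 2 / 2 * s ^ A ω) :=
    ((hXsm.const_mul l).sub (((measurable_const_rpow hs).comp hAm).const_mul _)).exp
  set obs : Option ℝ → Ω → ℝ := fun i => match i with
    | none => A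
    | some u => fun ω => B (u ^ A ω) ω
    with hobs
  set obs2 : Option ℝ → ℝ × Ω → ℝ := fun i p => match i with
    | none => p.1
    | some u => B (u ^ p.1) p.2
    with hobs2
  have hobs_eq : ∀ (i : Option ℝ) (ω : Ω), obs i ω = obs2 i (A ω, ω) := by
    intro i ω; cases i <;> rfl
  set SS : Set (Option ℝ) := insert none (some '' Set.Icc 0 s) with hSS
  have hmemIcc : ∀ u : ℝ, some u ∈ SS → u ∈ Set.Icc (0:ℝ) s := by
    intro u hu
    rcases Set.mem_insert_iff.mp hu with h | h
    · exact absurd h (by simp)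
    · obtain ⟨u', hu', he⟩ := h
      exact (Option.some.inj he) ▸ hu'
  have hsup : (⨆ i ∈ SS, MeasurableSpace.comap (obs i) inferInstance)
      = sbmreFiltration A (fun u ω => B (u ^ A ω) ω) s := by
    rw [hSS, iSup_insert, iSup_image]
    rfl
  have hgen : sbmreFiltration A (fun u ω => B (u ^ A ω) ω) s
      = MeasurableSpace.generateFrom (piiUnionInter
          (fun i => {C | MeasurableSet[MeasurableSpace.comap (obs i) inferInstance] C}) SS) := by
    rw [← hsup]
    exact (generateFrom_piiUnionInter_measurableSet
      (fun i => MeasurableSpace.comap (obs i) inferInstance) SS).symm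
  have hpi : IsPiSystem (piiUnionInter
      (fun i => {C | MeasurableSet[MeasurableSpace.comap (obs i) inferInstance] C}) SS) :=
    isPiSystem_piiUnionInter _
      (fun i => @MeasurableSpace.isPiSystem_measurableSet Ω (MeasurableSpace.comap (obs i) inferInstance)) _
  have key : ∀ C : Set Ω, MeasurableSet[sbmreFiltration A (fun u ω => B (u ^ A ω) ω) s] C →
      ∫⁻ ω in C, ENNReal.ofReal (rexp (l * B (t ^ A ω) ω - l ^ 2 / 2 * t ^ A ω)) ∂P
        = ∫⁻ ω in C, ENNReal.ofReal (rexp (l * B (s ^ A ω) ω - l ^ 2 / 2 * s ^ A ω)) ∂P := by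
    have hbasic : ∀ C ∈ piiUnionInter
        (fun i => {C | MeasurableSet[MeasurableSpace.comap (obs i) inferInstance] C}) SS,
        ∫⁻ ω in C, ENNReal.ofReal (rexp (l * B (t ^ A ω) ω - l ^ 2 / 2 * t ^ A ω)) ∂P
          = ∫⁻ ω in C, ENNReal.ofReal (rexp (l * B (s ^ A ω) ω - l ^ 2 / 2 * s ^ A ω)) ∂P := by
      rintro C ⟨tf, htfS, fs, hfs, rfl⟩
      have hCfil : MeasurableSet[sbmreFiltration A (fun u ω => B (u ^ A ω) ω) s]
          (⋂ i ∈ tf, fs i) := by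
        rw [hgen]
        exact MeasurableSpace.measurableSet_generateFrom ⟨tf, htfS, fs, hfs, rfl⟩
      have hCm : MeasurableSet (⋂ i ∈ tf, fs i) := hm _ hCfil
      have hchoice : ∀ i : Option ℝ, ∃ T : Set ℝ, MeasurableSet T ∧
          (i ∈ tf → fs i = obs i ⁻¹' T) := by
        intro i
        by_cases hi : i ∈ tf
        · obtain ⟨T, hTm, hTe⟩ := MeasurableSpace.measurableSet_comap.mp (hfs i hi)
          exact ⟨T, hTm, fun _ => hTe.symm⟩
        · exact ⟨∅, MeasurableSet.empty, fun h => absurd h hi⟩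
      choose T hT hTe using hchoice
      have hind_eq : ∀ ω, Set.indicator (⋂ i ∈ tf, fs i) (fun _ => (1:ℝ≥0∞)) ω
          = ∏ i ∈ tf, (T i).indicator (fun _ => (1:ℝ≥0∞)) (obs2 i (A ω, ω)) := by
        intro ω
        by_cases hω : ω ∈ ⋂ i ∈ tf, fs i
        · rw [Set.indicator_of_mem hω]
          symm
          refine Finset.prod_eq_one fun i hi => ?_
          have hωi : ω ∈ fs i := by
            simp only [Set.mem_iInter] at hω
            exact hω i hi
          rw [hTe i hi] at hωi
          rw [← hobs_eq i ω]
          exact Set.indicator_of_mem (Set.mem_preimage.mp hωi) _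
        · rw [Set.indicator_of_notMem hω]
          symm
          have hex : ∃ i ∈ tf, ω ∉ fs i := by
            by_contra h
            push_neg at h
            exact hω (Set.mem_iInter₂.mpr h)
          obtain ⟨i, hi, hωi⟩ := hex
          refine Finset.prod_eq_zero hi ?_
          rw [hTe i hi] at hωi
          rw [← hobs_eq i ω]
          exact Set.indicator_of_notMem (fun h => hωi (Set.mem_preimage.mpr h)) _
      have hFmeas : ∀ r : ℝ, 0 ≤ r →
          Measurable[@Prod.instMeasurableSpace ℝ Ω _ (bigB B)]
            fun p : ℝ × Ω => (∏ i ∈ tf, (T i).indicator (fun _ => (1:ℝ≥0∞)) (obs2 i p))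
              * ENNReal.ofReal (rexp (l * B (r ^ p.1) p.2 - l ^ 2 / 2 * r ^ p.1)) := by
        intro r hr
        refine Measurable.mul ?_ (meas_Z (mΩ := bigB B) B hBu𝓑 hcont hr l (l ^ 2 / 2))
        refine Finset.measurable_prod tf fun i hi => ?_
        cases i with
        | none => exact meas_ind_fst (mΩ := bigB B) (hT none)
        | some u =>
          exact meas_ind_B (mΩ := bigB B) B hBu𝓑 hcont (hmemIcc u (htfS hi)).1 (hT _)
      have hform : ∀ r : ℝ, 0 ≤ r →
          ∫⁻ ω in ⋂ i ∈ tf, fs i,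
              ENNReal.ofReal (rexp (l * B (r ^ A ω) ω - l ^ 2 / 2 * r ^ A ω)) ∂P
            = ∫⁻ a, ∫⁻ ω, (∏ i ∈ tf, (T i).indicator (fun _ => (1:ℝ≥0∞)) (obs2 i (a, ω)))
                * ENNReal.ofReal (rexp (l * B (r ^ a) ω - l ^ 2 / 2 * r ^ a)) ∂P ∂(P.map A) := by
        intro r hr
        rw [← lintegral_indicator hCm]
        have hpt : ∀ ω, Set.indicator (⋂ i ∈ tf, fs i)
            (fun ω => ENNReal.ofReal (rexp (l * B (r ^ A ω) ω - l ^ 2 / 2 * r ^ A ω))) ω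
            = (∏ i ∈ tf, (T i).indicator (fun _ => (1:ℝ≥0∞)) (obs2 i (A ω, ω)))
              * ENNReal.ofReal (rexp (l * B (r ^ A ω) ω - l ^ 2 / 2 * r ^ A ω)) := by
          intro ω
          rw [← hind_eq ω]
          by_cases hω : ω ∈ ⋂ i ∈ tf, fs i
          · rw [Set.indicator_of_mem hω, Set.indicator_of_mem hω, one_mul]
          · rw [Set.indicator_of_notMem hω, Set.indicator_of_notMem hω, zero_mul]
        rw [lintegral_congr hpt]
        exact hfub _ (hFmeas r hr)
      have hinner : ∀ᵐ a ∂(P.map A),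
          ∫⁻ ω, (∏ i ∈ tf, (T i).indicator (fun _ => (1:ℝ≥0∞)) (obs2 i (a, ω)))
              * ENNReal.ofReal (rexp (l * B (t ^ a) ω - l ^ 2 / 2 * t ^ a)) ∂P
            = ∫⁻ ω, (∏ i ∈ tf, (T i).indicator (fun _ => (1:ℝ≥0∞)) (obs2 i (a, ω)))
                * ENNReal.ofReal (rexp (l * B (s ^ a) ω - l ^ 2 / 2 * s ^ a)) ∂P := by
        filter_upwards [hμA_supp] with a ha
        refine hstep a ha s t hs hst _ ?_
        refine Finset.measurable_prod tf fun i hi => ?_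
        cases i with
        | none =>
          simp only [hobs2]
          exact measurable_const
        | some u =>
          have hu : u ∈ Set.Icc (0:ℝ) s := hmemIcc u (htfS hi)
          have hua : u ^ a ∈ Set.Icc (0:ℝ) (s ^ a) :=
            ⟨Real.rpow_nonneg hu.1 a, Real.rpow_le_rpow hu.1 hu.2 ha.1.le⟩
          have hBm : Measurable[⨆ v ∈ Set.Icc (0:ℝ) (s ^ a),
              MeasurableSpace.comap (B v) inferInstance] (B (u ^ a)) :=
            Measurable.of_comap_le (le_iSup₂ (f := fun v (_ : v ∈ Set.Icc (0:ℝ) (s ^ a)) =>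
              MeasurableSpace.comap (B v) inferInstance) (u ^ a) hua)
          exact (measurable_const.indicator (hT _)).comp hBm
      rw [hform t hst0, hform s hs]
      exact lintegral_congr_ae hinner
    intro C hC
    refine MeasurableSpace.induction_on_inter
      (m := sbmreFiltration A (fun u ω => B (u ^ A ω) ω) s) hgen hpi ?_ hbasic ?_ ?_ C hC
    · simp
    · intro D hD hQ
      have hDm : MeasurableSet D := hm _ hD
      have h1t := lintegral_add_compl
        (fun ω => ENNReal.ofReal (rexp (l * B (t ^ A ω) ω - l ^ 2 / 2 * t ^ A ω))) hDm (μ := P)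
      have h1s := lintegral_add_compl
        (fun ω => ENNReal.ofReal (rexp (l * B (s ^ A ω) ω - l ^ 2 / 2 * s ^ A ω))) hDm (μ := P)
      rw [hZlint t hst0] at h1t
      rw [hZlint s hs] at h1s
      have hfin : ∫⁻ ω in D,
          ENNReal.ofReal (rexp (l * B (s ^ A ω) ω - l ^ 2 / 2 * s ^ A ω)) ∂P ≠ ⊤ := by
        refine ne_of_lt (lt_of_le_of_lt (setLIntegral_le_lintegral _ _) ?_)
        rw [hZlint s hs]
        exact ENNReal.one_lt_top
      have hsum := h1t.trans h1s.symm
      rw [hQ] at hsum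
      exact (ENNReal.add_right_inj hfin).mp hsum
    · intro g hdis hgm hQ
      rw [lintegral_iUnion (fun i => hm _ (hgm i)) hdis,
        lintegral_iUnion (fun i => hm _ (hgm i)) hdis]
      exact tsum_congr hQ
  have hsetint : ∀ C : Set Ω, MeasurableSet[sbmreFiltration A (fun u ω => B (u ^ A ω) ω) s] C →
      P C < ⊤ →
      ∫ ω in C, rexp (l * B (s ^ A ω) ω - l ^ 2 / 2 * s ^ A ω) ∂P
        = ∫ ω in C, rexp (l * B (t ^ A ω) ω - l ^ 2 / 2 * t ^ A ω) ∂P := by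
    intro C hC _
    rw [integral_eq_lintegral_of_nonneg_ae (ae_of_all _ fun ω => exp_nonneg _)
        ((hYmeas s hs).aestronglyMeasurable.restrict),
      integral_eq_lintegral_of_nonneg_ae (ae_of_all _ fun ω => exp_nonneg _)
        ((hYmeas t hst0).aestronglyMeasurable.restrict),
      key C hC]
  exact (ae_eq_condExp_of_forall_setIntegral_eq hm (hInt t hst0)
    (fun C _ _ => (hInt s hs).integrableOn)
    hsetint
    (StronglyMeasurable.aestronglyMeasurable (hYsm.stronglyMeasurable))).symm
end

section
/- Let B be a standard Brownian motion, 0 < A₁ < A₂, p ∈ (0,1), and A : Ω → ℝ independent of B with P(A = A₁) = p and P(A = A₂) = 1 − p. Let X(t)(ω) = B(t^{A(ω)})(ω) and fix 0 < τ < T. Then E[ (1/(T−τ)) ∫₀^{T−τ} (X(t+τ) − X(t))² dt ] = (1/(T−τ)) · [ p·(T^{A₁+1} − (T−τ)^{A₁+1} − τ^{A₁+1})/(A₁+1) + (1−p)·(T^{A₂+1} − (T−τ)^{A₂+1} − τ^{A₂+1})/(A₂+1) ]. -/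
open MeasureTheory ProbabilityTheory Filter Real

open scoped NNReal ENNReal

lemma int_sq_exp {b : ℝ} (hb : 0 < b) :
    ∫ x : ℝ, x ^ 2 * rexp (-b * x ^ 2) = b ^ (-(3:ℝ)/2) * (Real.sqrt π / 2) := by
  have h2 : ∀ x : ℝ, x ^ (2:ℝ) = x ^ 2 := fun x => by
    rw [show (2:ℝ) = ((2:ℕ):ℝ) by norm_num, Real.rpow_natCast]
  have hIoi : ∫ x in Set.Ioi (0:ℝ), x ^ 2 * rexp (-b * x ^ 2)
      = b ^ (-(3:ℝ)/2) * (1/2) * Real.Gamma (3/2) := by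
    have := integral_rpow_mul_exp_neg_mul_rpow (p := 2) (q := 2) (b := b)
      (by norm_num) (by norm_num) hb
    rw [show ∫ x in Set.Ioi (0:ℝ), x ^ (2:ℝ) * rexp (-b * x ^ (2:ℝ))
        = ∫ x in Set.Ioi (0:ℝ), x ^ 2 * rexp (-b * x ^ 2) by
        refine setIntegral_congr_fun measurableSet_Ioi fun x _ => by rw [h2]] at this
    rw [this]; norm_num
  have hIic : ∫ x in Set.Iic (0:ℝ), x ^ 2 * rexp (-b * x ^ 2)
      = ∫ x in Set.Ioi (0:ℝ), x ^ 2 * rexp (-b * x ^ 2) := by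
    have := integral_comp_neg_Ioi (c := 0) (f := fun x : ℝ => x ^ 2 * rexp (-b * x ^ 2))
    simp only [neg_zero] at this
    rw [← this]
    refine setIntegral_congr_fun measurableSet_Ioi fun x _ => by ring_nf
  have hint : Integrable (fun x : ℝ => x ^ 2 * rexp (-b * x ^ 2)) := by
    have := integrable_rpow_mul_exp_neg_mul_sq hb (s := 2) (by norm_num)
    refine this.congr (Eventually.of_forall fun x => by simp only [h2])
  have := intervalIntegral.integral_Iic_add_Ioi (b := (0:ℝ)) (μ := volume)
    (f := fun x : ℝ => x ^ 2 * rexp (-b * x ^ 2)) hint.integrableOn hint.integrableOn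
  have hG : Real.Gamma (3/2) = Real.sqrt π / 2 := by
    rw [show (3/2 : ℝ) = 1/2 + 1 by norm_num, Real.Gamma_add_one (by norm_num),
      Real.Gamma_one_half_eq]; ring
  rw [← this, hIic, hIoi, hG]; ring

lemma integral_sq_pdf (v : ℝ≥0) (hv : v ≠ 0) :
    ∫ x : ℝ, gaussianPDFReal 0 v x * x ^ 2 = v := by
  have hv0 : (0:ℝ) < v := by exact_mod_cast hv.bot_lt
  set b : ℝ := (2 * (v:ℝ))⁻¹ with hbdef
  have hb : 0 < b := by positivity
  have hpt : ∀ x : ℝ, gaussianPDFReal 0 v x * x ^ 2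
      = (Real.sqrt (2 * π * v))⁻¹ * (x ^ 2 * rexp (-b * x ^ 2)) := by
    intro x
    rw [gaussianPDFReal, show -(x - 0)^2/(2*(v:ℝ)) = -b * x^2 by rw [hbdef]; field_simp; ring]
    ring
  rw [show (fun x : ℝ => gaussianPDFReal 0 v x * x ^ 2)
      = fun x => (Real.sqrt (2 * π * v))⁻¹ * (x ^ 2 * rexp (-b * x ^ 2)) from funext hpt]
  rw [integral_const_mul, int_sq_exp hb]
  have hbr : b ^ (-(3:ℝ)/2) = (2 * (v:ℝ)) * Real.sqrt (2 * (v:ℝ)) := by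
    rw [hbdef, ← Real.rpow_neg_one, ← Real.rpow_mul (by positivity)]
    norm_num
    rw [show ((3:ℝ)/2) = 1 + 1/2 by norm_num, Real.rpow_add (by positivity),
      Real.rpow_one, Real.sqrt_eq_rpow,
      Real.mul_rpow (by norm_num) (by positivity), Real.sqrt_eq_rpow]
  rw [hbr]
  have hs : Real.sqrt (2 * (v:ℝ)) * Real.sqrt π = Real.sqrt (2 * π * v) := by
    rw [← Real.sqrt_mul (by positivity)]; ring_nf
  have hpos : (0:ℝ) < Real.sqrt (2 * π * v) := Real.sqrt_pos.mpr (by positivity)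
  field_simp
  nlinarith [hs, hpos]

lemma lintegral_sq_gaussianReal (v : ℝ≥0) :
    ∫⁻ x, ENNReal.ofReal (x ^ 2) ∂(gaussianReal 0 v) = (v : ℝ≥0∞) := by
  rcases eq_or_ne v 0 with rfl | hv
  · rw [gaussianReal_zero_var]
    rw [lintegral_dirac' _ (by measurability)]
    simp
  · rw [gaussianReal_of_var_ne_zero _ hv,
      lintegral_withDensity_eq_lintegral_mul _ (measurable_gaussianPDF 0 v)
        (by measurability)]
    have hpt : ∀ x : ℝ, (gaussianPDF 0 v * fun x => ENNReal.ofReal (x ^ 2)) x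
        = ENNReal.ofReal (gaussianPDFReal 0 v x * x ^ 2) := by
      intro x
      simp only [Pi.mul_apply, gaussianPDF]
      rw [← ENNReal.ofReal_mul (gaussianPDFReal_nonneg 0 v x)]
    rw [lintegral_congr hpt, ← ofReal_integral_eq_lintegral_ofReal]
    · rw [integral_sq_pdf v hv, ENNReal.ofReal_coe_nnreal]
    · have hv0 : (0:ℝ) < v := by exact_mod_cast hv.bot_lt
      have hb : (0:ℝ) < (2 * (v:ℝ))⁻¹ := by positivity
      have := (integrable_rpow_mul_exp_neg_mul_sq hb (s := 2) (by norm_num)).const_mul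
        ((Real.sqrt (2 * π * v))⁻¹)
      refine this.congr (Eventually.of_forall fun x => ?_)
      simp only [gaussianPDFReal]
      rw [show -(x - 0)^2/(2*(v:ℝ)) = -(2 * (v:ℝ))⁻¹ * x^2 by field_simp; ring,
        show x ^ (2:ℝ) = x ^ 2 by
          rw [show (2:ℝ) = ((2:ℕ):ℝ) by norm_num, Real.rpow_natCast]]
      ring
    · exact Eventually.of_forall fun x => mul_nonneg (gaussianPDFReal_nonneg 0 v x) (sq_nonneg x)

lemma lintegral_sq_incr {Ω : Type*} [MeasurableSpace Ω] (P : Measure Ω)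
    [IsProbabilityMeasure P] (B : ℝ → Ω → ℝ) (hBm : Measurable (Function.uncurry B))
    (hlaw : ∀ s t : ℝ, 0 ≤ s → s ≤ t →
      P.map (fun ω => B t ω - B s ω) = gaussianReal 0 (Real.toNNReal (t - s)))
    {u w : ℝ} (hu : 0 ≤ u) (huw : u ≤ w) :
    ∫⁻ ω, ENNReal.ofReal ((B w ω - B u ω) ^ 2) ∂P = ENNReal.ofReal (w - u) := by
  have hBw : Measurable (B w) := hBm.comp (measurable_const.prodMk measurable_id)
  have hBu : Measurable (B u) := hBm.comp (measurable_const.prodMk measurable_id)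
  have hg : Measurable (fun ω => B w ω - B u ω) := hBw.sub hBu
  have : ∫⁻ ω, ENNReal.ofReal ((B w ω - B u ω) ^ 2) ∂P
      = ∫⁻ x, ENNReal.ofReal (x ^ 2) ∂(P.map (fun ω => B w ω - B u ω)) := by
    rw [lintegral_map (by measurability) hg]
  rw [this, hlaw u w hu huw, lintegral_sq_gaussianReal]
  rw [ENNReal.ofReal]

lemma lintegral_set_indep {Ω : Type*} {m₂ : MeasurableSpace Ω} [mΩ : MeasurableSpace Ω]
    (P : Measure Ω) (hm₂ : m₂ ≤ mΩ) {A : Ω → ℝ} (hA : Measurable A)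
    (hindep : Indep (MeasurableSpace.comap A inferInstance) m₂ P) (a : ℝ)
    {g : Ω → ℝ≥0∞} (hg : Measurable[m₂] g) :
    ∫⁻ ω in A ⁻¹' {a}, g ω ∂P = P (A ⁻¹' {a}) * ∫⁻ ω, g ω ∂P := by
  set s := A ⁻¹' {a} with hs
  have hsm : MeasurableSet s := hA (measurableSet_singleton a)
  have hsm' : MeasurableSet[MeasurableSpace.comap A inferInstance] s :=
    ⟨{a}, measurableSet_singleton a, rfl⟩
  have hf : Measurable[MeasurableSpace.comap A inferInstance]
      (s.indicator (fun _ => (1:ℝ≥0∞))) := measurable_const.indicator hsm'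
  have key := lintegral_mul_eq_lintegral_mul_lintegral_of_independent_measurableSpace
    (Mf := MeasurableSpace.comap A inferInstance) (Mg := m₂) (mΩ := mΩ) (μ := P)
    (measurable_iff_comap_le.1 hA) hm₂ hindep hf hg
  have h1 : ∀ ω, s.indicator (fun _ => (1:ℝ≥0∞)) ω * g ω = s.indicator g ω := by
    intro ω
    by_cases h : ω ∈ s <;> simp [Set.indicator_apply, h]
  rw [lintegral_congr h1] at key
  rw [← lintegral_indicator hsm, key, lintegral_indicator_const hsm, one_mul]

lemma key_t {Ω : Type*} [mΩ : MeasurableSpace Ω] (P : Measure Ω)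
    [IsProbabilityMeasure P] (B : ℝ → Ω → ℝ) (hBm : Measurable (Function.uncurry B))
    (hlaw : ∀ s t : ℝ, 0 ≤ s → s ≤ t →
      P.map (fun ω => B t ω - B s ω) = gaussianReal 0 (Real.toNNReal (t - s)))
    (A₁ A₂ p : ℝ) (hA1 : 0 < A₁) (hA12 : A₁ < A₂) (hp : p ∈ Set.Ioo (0:ℝ) 1)
    (A : Ω → ℝ) (hA : Measurable A)
    (hindep : Indep (MeasurableSpace.comap A inferInstance)
      (⨆ u ∈ Set.Ici (0:ℝ), MeasurableSpace.comap (B u) inferInstance) P)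
    (hp1 : P {ω | A ω = A₁} = ENNReal.ofReal p)
    (hp2 : P {ω | A ω = A₂} = ENNReal.ofReal (1 - p))
    (τ : ℝ) (hτ : 0 < τ) (t : ℝ) (ht : 0 ≤ t) :
    ∫⁻ ω, ENNReal.ofReal ((B ((t + τ) ^ A ω) ω - B (t ^ A ω) ω) ^ 2) ∂P
      = ENNReal.ofReal p * ENNReal.ofReal ((t + τ) ^ A₁ - t ^ A₁)
        + ENNReal.ofReal (1 - p) * ENNReal.ofReal ((t + τ) ^ A₂ - t ^ A₂) := by
  have hm₂ : (⨆ u ∈ Set.Ici (0:ℝ), MeasurableSpace.comap (B u) inferInstance) ≤ mΩ := by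
    refine iSup₂_le fun u hu => ?_
    exact measurable_iff_comap_le.1 (hBm.comp (measurable_const.prodMk measurable_id))
  have hmB : ∀ v : ℝ, 0 ≤ v →
      Measurable[⨆ u ∈ Set.Ici (0:ℝ), MeasurableSpace.comap (B u) inferInstance] (B v) := by
    intro v hv
    exact Measurable.mono (Measurable.of_comap_le le_rfl)
      (le_biSup (fun u => MeasurableSpace.comap (B u) inferInstance) hv) le_rfl
  set E₁ : Set Ω := A ⁻¹' {A₁} with hE₁
  set E₂ : Set Ω := A ⁻¹' {A₂} with hE₂
  have hE₁m : MeasurableSet E₁ := hA (measurableSet_singleton _)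
  have hE₂m : MeasurableSet E₂ := hA (measurableSet_singleton _)
  have hP1 : P E₁ = ENNReal.ofReal p := hp1
  have hP2 : P E₂ = ENNReal.ofReal (1 - p) := hp2
  have hdisj : Disjoint E₁ E₂ := by
    rw [Set.disjoint_left]
    intro ω h1 h2
    exact hA12.ne (h1.symm.trans h2)
  have hunion : P (E₁ ∪ E₂) = 1 := by
    rw [measure_union hdisj hE₂m, hP1, hP2,
      ← ENNReal.ofReal_add hp.1.le (by linarith [hp.2] : (0:ℝ) ≤ 1 - p)]
    norm_num
  have hres : P.restrict (E₁ ∪ E₂) = P := by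
    refine Measure.restrict_eq_self_of_ae_mem ?_
    rw [ae_iff]
    have : {ω | ¬ ω ∈ E₁ ∪ E₂} = (E₁ ∪ E₂)ᶜ := rfl
    rw [this, measure_compl (hE₁m.union hE₂m) (measure_ne_top _ _), hunion, measure_univ]
    simp
  -- the two constant-exponent increments
  have hincr : ∀ a : ℝ, 0 < a →
      ∫⁻ ω, ENNReal.ofReal ((B ((t + τ) ^ a) ω - B (t ^ a) ω) ^ 2) ∂P
        = ENNReal.ofReal ((t + τ) ^ a - t ^ a) := by
    intro a ha
    have h1 : (0:ℝ) ≤ t ^ a := Real.rpow_nonneg ht a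
    have h2 : t ^ a ≤ (t + τ) ^ a :=
      Real.rpow_le_rpow ht (by linarith) ha.le
    exact lintegral_sq_incr P B hBm hlaw h1 h2
  have hgm : ∀ a : ℝ, 0 < a →
      Measurable[⨆ u ∈ Set.Ici (0:ℝ), MeasurableSpace.comap (B u) inferInstance]
      (fun ω => ENNReal.ofReal ((B ((t + τ) ^ a) ω - B (t ^ a) ω) ^ 2)) := by
    intro a ha
    have h1 : (0:ℝ) ≤ t ^ a := Real.rpow_nonneg ht a
    have h2 : (0:ℝ) ≤ (t + τ) ^ a := Real.rpow_nonneg (by linarith) a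
    exact ENNReal.measurable_ofReal.comp (((hmB _ h2).sub (hmB _ h1)).pow_const 2)
  calc ∫⁻ ω, ENNReal.ofReal ((B ((t + τ) ^ A ω) ω - B (t ^ A ω) ω) ^ 2) ∂P
      = ∫⁻ ω in E₁ ∪ E₂, ENNReal.ofReal ((B ((t + τ) ^ A ω) ω - B (t ^ A ω) ω) ^ 2) ∂P := by
        rw [hres]
    _ = (∫⁻ ω in E₁, ENNReal.ofReal ((B ((t + τ) ^ A ω) ω - B (t ^ A ω) ω) ^ 2) ∂P)
        + ∫⁻ ω in E₂, ENNReal.ofReal ((B ((t + τ) ^ A ω) ω - B (t ^ A ω) ω) ^ 2) ∂P := by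
        rw [lintegral_union hE₂m hdisj]
    _ = (∫⁻ ω in E₁, ENNReal.ofReal ((B ((t + τ) ^ A₁) ω - B (t ^ A₁) ω) ^ 2) ∂P)
        + ∫⁻ ω in E₂, ENNReal.ofReal ((B ((t + τ) ^ A₂) ω - B (t ^ A₂) ω) ^ 2) ∂P := by
        congr 1
        · refine setLIntegral_congr_fun hE₁m (fun ω hω => ?_)
          have : A ω = A₁ := hω
          rw [this]
        · refine setLIntegral_congr_fun hE₂m (fun ω hω => ?_)
          have : A ω = A₂ := hω
          rw [this]
    _ = ENNReal.ofReal p * ENNReal.ofReal ((t + τ) ^ A₁ - t ^ A₁)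
        + ENNReal.ofReal (1 - p) * ENNReal.ofReal ((t + τ) ^ A₂ - t ^ A₂) := by
        rw [lintegral_set_indep P hm₂ hA hindep A₁ (hgm A₁ hA1),
          lintegral_set_indep P hm₂ hA hindep A₂ (hgm A₂ (hA1.trans hA12)),
          hP1, hP2, hincr A₁ hA1, hincr A₂ (hA1.trans hA12)]

lemma S_eq {a τ T : ℝ} (ha : 0 < a) (hτ : 0 < τ) (hτT : τ < T) :
    ∫ t in Set.Ioc (0:ℝ) (T - τ), ((t + τ) ^ a - t ^ a)
      = (T ^ (a + 1) - (T - τ) ^ (a + 1) - τ ^ (a + 1)) / (a + 1) := by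
  have hb : (0:ℝ) ≤ T - τ := by linarith
  have hI2 : IntervalIntegrable (fun t : ℝ => t ^ a) volume 0 (T - τ) :=
    intervalIntegral.intervalIntegrable_rpow (Or.inl ha.le)
  have hI0 : IntervalIntegrable (fun t : ℝ => t ^ a) volume τ (T - τ + τ) :=
    intervalIntegral.intervalIntegrable_rpow (Or.inl ha.le)
  have hI1 : IntervalIntegrable (fun t : ℝ => (t + τ) ^ a) volume 0 (T - τ) := by
    have := hI0.comp_add_right τ
    simpa using this
  rw [← intervalIntegral.integral_of_le hb, intervalIntegral.integral_sub hI1 hI2,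
    intervalIntegral.integral_comp_add_right (fun u => u ^ a),
    integral_rpow (Or.inl (by linarith : (-1:ℝ) < a)),
    integral_rpow (Or.inl (by linarith : (-1:ℝ) < a)),
    Real.zero_rpow (by positivity), zero_add, show T - τ + τ = T by ring]
  ring

theorem sbmre_two_point_tamsd' {Ω : Type*} [MeasurableSpace Ω] (P : Measure Ω)
    [IsProbabilityMeasure P] (B : ℝ → Ω → ℝ)
    (hBm : Measurable (Function.uncurry B))
    (hlaw : ∀ s t : ℝ, 0 ≤ s → s ≤ t →
      P.map (fun ω => B t ω - B s ω) = gaussianReal 0 (Real.toNNReal (t - s)))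
    (A₁ A₂ p : ℝ) (hA1 : 0 < A₁) (hA12 : A₁ < A₂) (hp : p ∈ Set.Ioo (0:ℝ) 1)
    (A : Ω → ℝ) (hA : Measurable A)
    (hindep : Indep (MeasurableSpace.comap A inferInstance)
      (⨆ u ∈ Set.Ici (0:ℝ), MeasurableSpace.comap (B u) inferInstance) P)
    (hp1 : P {ω | A ω = A₁} = ENNReal.ofReal p)
    (hp2 : P {ω | A ω = A₂} = ENNReal.ofReal (1 - p))
    (τ T : ℝ) (hτ : 0 < τ) (hτT : τ < T) :
    ∫ ω, (1 / (T - τ)) *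
        (∫ t in (0:ℝ)..(T - τ), (B ((t + τ) ^ A ω) ω - B (t ^ A ω) ω) ^ 2) ∂P
      = (1 / (T - τ)) *
        (p * (T ^ (A₁ + 1) - (T - τ) ^ (A₁ + 1) - τ ^ (A₁ + 1)) / (A₁ + 1)
          + (1 - p) * (T ^ (A₂ + 1) - (T - τ) ^ (A₂ + 1) - τ ^ (A₂ + 1)) / (A₂ + 1)) := by
  have hb : (0:ℝ) < T - τ := by linarith
  have hA2 : 0 < A₂ := hA1.trans hA12
  -- the integrand as a function on Ω × ℝ
  set g : Ω × ℝ → ℝ := fun q => (B ((q.2 + τ) ^ A q.1) q.1 - B (q.2 ^ A q.1) q.1) ^ 2 with hg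
  have hGm : Measurable g := by
    have h1 : Measurable fun q : Ω × ℝ => B ((q.2 + τ) ^ A q.1) q.1 :=
      hBm.comp (((((measurable_snd.add_const τ)).pow (hA.comp measurable_fst))).prodMk
        measurable_fst)
    have h2 : Measurable fun q : Ω × ℝ => B (q.2 ^ A q.1) q.1 :=
      hBm.comp ((((measurable_snd).pow (hA.comp measurable_fst))).prodMk measurable_fst)
    exact (h1.sub h2).pow_const 2
  set f : Ω → ℝ := fun ω =>
    ∫ t in (0:ℝ)..(T - τ), (B ((t + τ) ^ A ω) ω - B (t ^ A ω) ω) ^ 2 with hf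
  have hfset : ∀ ω, f ω = ∫ t in Set.Ioc (0:ℝ) (T - τ), g (ω, t) :=
    fun ω => intervalIntegral.integral_of_le hb.le
  have hfnonneg : ∀ ω, 0 ≤ f ω :=
    fun ω => intervalIntegral.integral_nonneg hb.le fun u _ => sq_nonneg _
  have hfmeas : Measurable f := by
    rw [show f = fun ω => ∫ t in Set.Ioc (0:ℝ) (T - τ), g (ω, t) from funext hfset]
    exact (hGm.stronglyMeasurable.integral_prod_right').measurable
  -- the ENNReal-valued inner integral
  set G : Ω → ℝ≥0∞ := fun ω =>
    ∫⁻ t in Set.Ioc (0:ℝ) (T - τ), ENNReal.ofReal (g (ω, t)) with hG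
  have hGmeas : Measurable G :=
    Measurable.lintegral_prod_right' (ENNReal.measurable_ofReal.comp hGm)
  -- deterministic integrals
  set S₁ : ℝ := (T ^ (A₁ + 1) - (T - τ) ^ (A₁ + 1) - τ ^ (A₁ + 1)) / (A₁ + 1) with hS₁
  set S₂ : ℝ := (T ^ (A₂ + 1) - (T - τ) ^ (A₂ + 1) - τ ^ (A₂ + 1)) / (A₂ + 1) with hS₂
  have hd : ∀ a : ℝ, 0 < a → ∀ t ∈ Set.Ioc (0:ℝ) (T - τ), (0:ℝ) ≤ (t + τ) ^ a - t ^ a := by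
    intro a ha t ht
    exact sub_nonneg.2 (Real.rpow_le_rpow ht.1.le (by linarith) ha.le)
  have hdint : ∀ a : ℝ, 0 < a →
      IntegrableOn (fun t : ℝ => (t + τ) ^ a - t ^ a) (Set.Ioc 0 (T - τ)) volume := by
    intro a ha
    have hI2 : IntervalIntegrable (fun t : ℝ => t ^ a) volume 0 (T - τ) :=
      intervalIntegral.intervalIntegrable_rpow (Or.inl ha.le)
    have hI0 : IntervalIntegrable (fun t : ℝ => t ^ a) volume τ (T - τ + τ) :=
      intervalIntegral.intervalIntegrable_rpow (Or.inl ha.le)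
    have hI1 : IntervalIntegrable (fun t : ℝ => (t + τ) ^ a) volume 0 (T - τ) := by
      have := hI0.comp_add_right τ
      simpa using this
    exact (intervalIntegrable_iff_integrableOn_Ioc_of_le hb.le).1 (hI1.sub hI2)
  have hlint : ∀ a : ℝ, 0 < a →
      ∫⁻ t in Set.Ioc (0:ℝ) (T - τ), ENNReal.ofReal ((t + τ) ^ a - t ^ a)
        = ENNReal.ofReal ((T ^ (a + 1) - (T - τ) ^ (a + 1) - τ ^ (a + 1)) / (a + 1)) := by
    intro a ha
    rw [← ofReal_integral_eq_lintegral_ofReal (hdint a ha)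
      ((ae_restrict_iff' measurableSet_Ioc).2 (ae_of_all _ (hd a ha))),
      S_eq ha hτ hτT]
  -- nonnegativity of the deterministic integrals
  have hS₁nn : 0 ≤ S₁ := by
    rw [hS₁, ← S_eq hA1 hτ hτT]
    exact setIntegral_nonneg measurableSet_Ioc (hd A₁ hA1)
  have hS₂nn : 0 ≤ S₂ := by
    rw [hS₂, ← S_eq hA2 hτ hτT]
    exact setIntegral_nonneg measurableSet_Ioc (hd A₂ hA2)
  -- Tonelli + the pointwise-in-t computation
  have hGval : ∫⁻ ω, G ω ∂P = ENNReal.ofReal (p * S₁ + (1 - p) * S₂) := by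
    have hswap : ∫⁻ ω, G ω ∂P
        = ∫⁻ t in Set.Ioc (0:ℝ) (T - τ), ∫⁻ ω, ENNReal.ofReal (g (ω, t)) ∂P ∂volume :=
      lintegral_lintegral_swap (ENNReal.measurable_ofReal.comp hGm).aemeasurable
    rw [hswap]
    have hkey : ∀ t ∈ Set.Ioc (0:ℝ) (T - τ),
        ∫⁻ ω, ENNReal.ofReal (g (ω, t)) ∂P
          = ENNReal.ofReal p * ENNReal.ofReal ((t + τ) ^ A₁ - t ^ A₁)
            + ENNReal.ofReal (1 - p) * ENNReal.ofReal ((t + τ) ^ A₂ - t ^ A₂) := by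
      intro t ht
      exact key_t P B hBm hlaw A₁ A₂ p hA1 hA12 hp A hA hindep hp1 hp2 τ hτ t ht.1.le
    rw [setLIntegral_congr_fun measurableSet_Ioc hkey]
    have hm1 : Measurable fun t : ℝ => ENNReal.ofReal ((t + τ) ^ A₁ - t ^ A₁) :=
      (((measurable_id.add_const τ).pow measurable_const).sub
        (measurable_id.pow measurable_const)).ennreal_ofReal
    have hm2 : Measurable fun t : ℝ => ENNReal.ofReal ((t + τ) ^ A₂ - t ^ A₂) :=
      (((measurable_id.add_const τ).pow measurable_const).sub
        (measurable_id.pow measurable_const)).ennreal_ofReal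
    rw [lintegral_add_left (hm1.const_mul _), lintegral_const_mul _ hm1,
      lintegral_const_mul _ hm2, hlint A₁ hA1, hlint A₂ hA2, ← hS₁, ← hS₂,
      ← ENNReal.ofReal_mul hp.1.le, ← ENNReal.ofReal_mul (by linarith [hp.2] : (0:ℝ) ≤ 1 - p),
      ← ENNReal.ofReal_add (mul_nonneg hp.1.le hS₁nn)
        (mul_nonneg (by linarith [hp.2]) hS₂nn)]
  -- a.e. finiteness of G and conversion
  have hGfin : ∀ᵐ ω ∂P, G ω < ⊤ := ae_lt_top hGmeas (by rw [hGval]; exact ENNReal.ofReal_ne_top)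
  have hcongr : ∀ᵐ ω ∂P, ENNReal.ofReal (f ω) = G ω := by
    filter_upwards [hGfin] with ω hω
    have hsec : Measurable fun t => g (ω, t) :=
      hGm.comp (measurable_const.prodMk measurable_id)
    have : f ω = (G ω).toReal := by
      rw [hfset ω, integral_eq_lintegral_of_nonneg_ae
        (ae_of_all _ fun t => sq_nonneg _) hsec.aestronglyMeasurable]
    rw [this, ENNReal.ofReal_toReal hω.ne]
  -- put everything together
  rw [show (fun ω => (1 / (T - τ)) *
      (∫ t in (0:ℝ)..(T - τ), (B ((t + τ) ^ A ω) ω - B (t ^ A ω) ω) ^ 2)) = fun ω =>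
      (1 / (T - τ)) * f ω from rfl]
  rw [integral_const_mul]
  rw [integral_eq_lintegral_of_nonneg_ae (ae_of_all _ hfnonneg) hfmeas.aestronglyMeasurable]
  rw [lintegral_congr_ae hcongr, hGval,
    ENNReal.toReal_ofReal (add_nonneg (mul_nonneg hp.1.le hS₁nn)
      (mul_nonneg (by linarith [hp.2]) hS₂nn))]
  rw [hS₁, hS₂]
  ring

/-- The expected TAMSD of the SBMRE with two-point distributed exponent:
`E[δ(τ)] = (1/(T−τ)) [ p (T^{A₁+1} − (T−τ)^{A₁+1} − τ^{A₁+1})/(A₁+1)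
  + (1−p)(T^{A₂+1} − (T−τ)^{A₂+1} − τ^{A₂+1})/(A₂+1) ]`. -/
theorem sbmre_two_point_tamsd {Ω : Type*} [MeasurableSpace Ω] (P : Measure Ω)
    [IsProbabilityMeasure P] (B : ℝ → Ω → ℝ) (hB : IsStdBM P B)
    (A₁ A₂ p : ℝ) (hA1 : 0 < A₁) (hA12 : A₁ < A₂) (hp : p ∈ Set.Ioo (0:ℝ) 1)
    (A : Ω → ℝ) (hA : Measurable A)
    (hindep : Indep (MeasurableSpace.comap A inferInstance)
      (⨆ u ∈ Set.Ici (0:ℝ), MeasurableSpace.comap (B u) inferInstance) P)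
    (hp1 : P {ω | A ω = A₁} = ENNReal.ofReal p)
    (hp2 : P {ω | A ω = A₂} = ENNReal.ofReal (1 - p))
    (τ T : ℝ) (hτ : 0 < τ) (hτT : τ < T) :
    ∫ ω, (1 / (T - τ)) *
        (∫ t in (0:ℝ)..(T - τ), (B ((t + τ) ^ A ω) ω - B (t ^ A ω) ω) ^ 2) ∂P
      = (1 / (T - τ)) *
        (p * (T ^ (A₁ + 1) - (T - τ) ^ (A₁ + 1) - τ ^ (A₁ + 1)) / (A₁ + 1)
          + (1 - p) * (T ^ (A₂ + 1) - (T - τ) ^ (A₂ + 1) - τ ^ (A₂ + 1)) / (A₂ + 1)) := by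
  obtain ⟨-, hBm, hlaw, -⟩ := hB
  exact sbmre_two_point_tamsd' P B hBm hlaw A₁ A₂ p hA1 hA12 hp A hA hindep hp1 hp2 τ T hτ hτT
end

section
/- Fix 0 < A₁ < A₂, p ∈ (0,1) and τ > 0, and for T > τ define g(T) = (1/(T−τ)) · [ p·(T^{A₁+1} − (T−τ)^{A₁+1} − τ^{A₁+1})/(A₁+1) + (1−p)·(T^{A₂+1} − (T−τ)^{A₂+1} − τ^{A₂+1})/(A₂+1) ] (the expected TAMSD of SBMRE with two-point distributed exponent). Then g(T) is asymptotically equivalent to (τ/T)·( p·T^{A₁} + (1−p)·T^{A₂} ) as T → ∞; that is, lim_{T→∞} g(T) · T / ( τ·(p·T^{A₁} + (1−p)·T^{A₂}) ) = 1. -/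
open MeasureTheory ProbabilityTheory Filter Real

private lemma aux_phi (a : ℝ) (ha : 0 < a) :
    Tendsto (fun x : ℝ => (1 - (1 - x) ^ (a + 1) - x ^ (a + 1)) / ((a + 1) * (1 - x) * x))
      (nhdsWithin 0 (Set.Ioi 0)) (nhds 1) := by
  have ha1 : (0:ℝ) < a + 1 := by linarith
  -- slope limit
  have hslope : Tendsto (fun x : ℝ => (1 - (1 - x) ^ (a + 1)) / x)
      (nhdsWithin 0 (Set.Ioi 0)) (nhds (a + 1)) := by
    have hd : HasDerivAt (fun x : ℝ => (1 - x) ^ (a + 1)) (-(a + 1)) 0 := by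
      have h1 : HasDerivAt (fun x : ℝ => 1 - x) (-1) 0 := (hasDerivAt_id (0:ℝ)).const_sub 1
      have h2 : HasDerivAt (fun y : ℝ => y ^ (a + 1)) ((a + 1) * (1:ℝ) ^ (a + 1 - 1)) (1 - 0 : ℝ) := by
        have := Real.hasDerivAt_rpow_const (x := (1 - 0 : ℝ)) (p := a + 1) (by norm_num)
        simpa using this
      have h3 := h2.comp 0 h1
      simpa [Function.comp_def] using h3
    have h4 := hasDerivAt_iff_tendsto_slope.mp hd
    have h5 : Tendsto (slope (fun x : ℝ => (1 - x) ^ (a + 1)) 0)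
        (nhdsWithin 0 (Set.Ioi 0)) (nhds (-(a + 1))) :=
      h4.mono_left (nhdsWithin_mono _ fun x hx => ne_of_gt hx)
    have h6 := h5.neg
    rw [neg_neg] at h6
    refine h6.congr fun x => ?_
    simp only [slope_def_field, Real.one_rpow, sub_zero]
    ring
  -- x^a → 0
  have hxa : Tendsto (fun x : ℝ => x ^ a) (nhdsWithin 0 (Set.Ioi 0)) (nhds 0) := by
    have h := (Real.continuousAt_rpow_const 0 a (Or.inr ha.le)).tendsto
    rw [Real.zero_rpow ha.ne'] at h
    exact h.mono_left nhdsWithin_le_nhds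
  -- denominator factor
  have hden : Tendsto (fun x : ℝ => (a + 1) * (1 - x)) (nhdsWithin 0 (Set.Ioi 0)) (nhds (a + 1)) := by
    have h : Tendsto (fun x : ℝ => (a + 1) * (1 - x)) (nhds 0) (nhds ((a + 1) * (1 - 0))) :=
      (continuous_const.mul (continuous_const.sub continuous_id)).tendsto 0
    simpa using h.mono_left nhdsWithin_le_nhds
  have hmain := (hslope.sub hxa).div hden (ne_of_gt ha1)
  have hval : (a + 1 - 0) / (a + 1) = 1 := by rw [sub_zero, div_self (ne_of_gt ha1)]
  rw [hval] at hmain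
  refine hmain.congr' ?_
  filter_upwards [Ioo_mem_nhdsGT_of_mem (by norm_num : (0:ℝ) ∈ Set.Ico (0:ℝ) 1)] with x hx
  have hx0 : x ≠ 0 := ne_of_gt hx.1
  have hx1 : (1:ℝ) - x ≠ 0 := by have := hx.2; intro h; linarith [sub_eq_zero.mp h]
  rw [Real.rpow_add_one hx0 a]
  simp only [Pi.div_apply]
  field_simp

private lemma aux_r (a τ : ℝ) (ha : 0 < a) (hτ : 0 < τ) :
    Tendsto (fun T : ℝ =>
      (T ^ (a + 1) - (T - τ) ^ (a + 1) - τ ^ (a + 1)) * T / ((a + 1) * (T - τ) * τ * T ^ a))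
      atTop (nhds 1) := by
  have htend : Tendsto (fun T : ℝ => τ / T) atTop (nhdsWithin 0 (Set.Ioi 0)) := by
    rw [tendsto_nhdsWithin_iff]
    constructor
    · exact tendsto_const_nhds.div_atTop tendsto_id
    · filter_upwards [eventually_gt_atTop 0] with T hT using div_pos hτ hT
  have hcomp := (aux_phi a ha).comp htend
  refine hcomp.congr' ?_
  filter_upwards [eventually_gt_atTop τ] with T hT
  have hT0 : (0:ℝ) < T := hτ.trans hT
  set x := τ / T with hx
  have hx0 : 0 < x := div_pos hτ hT0
  have hx1 : x < 1 := (div_lt_one hT0).mpr hT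
  have hxT : x * T = τ := div_mul_cancel₀ τ hT0.ne'
  have h1 : T - τ = (1 - x) * T := by rw [sub_mul, one_mul, hxT]
  have h1x : (0:ℝ) < 1 - x := by linarith
  have e1 : (T - τ) ^ (a + 1) = (1 - x) ^ (a + 1) * T ^ (a + 1) := by
    rw [h1, Real.mul_rpow h1x.le hT0.le]
  have e2 : τ ^ (a + 1) = x ^ (a + 1) * T ^ (a + 1) := by
    rw [← hxT, Real.mul_rpow hx0.le hT0.le]
  have e3 : T ^ (a + 1) = T ^ a * T := Real.rpow_add_one hT0.ne' a
  have hTa : (0:ℝ) < T ^ a := Real.rpow_pos_of_pos hT0 a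
  show (1 - (1 - x) ^ (a + 1) - x ^ (a + 1)) / ((a + 1) * (1 - x) * x) = _
  rw [e1, e2, h1, ← hxT, e3]
  have ha1 : (0:ℝ) < a + 1 := by linarith
  field_simp

/-- Asymptotics of the expected TAMSD of the SBMRE with two-point distributed
exponent: for fixed lag `τ`, as `T → ∞`,
`g(T) ~ (τ/T)(p T^{A₁} + (1−p) T^{A₂})`, i.e.
`g(T) · T / (τ (p T^{A₁} + (1−p) T^{A₂})) → 1`. -/
theorem sbmre_two_point_tamsd_asymptotics (A₁ A₂ p τ : ℝ)
    (hA1 : 0 < A₁) (hA12 : A₁ < A₂) (hp : p ∈ Set.Ioo (0:ℝ) 1) (hτ : 0 < τ) :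
    Tendsto (fun T : ℝ =>
      ((1 / (T - τ)) *
          (p * (T ^ (A₁ + 1) - (T - τ) ^ (A₁ + 1) - τ ^ (A₁ + 1)) / (A₁ + 1)
            + (1 - p) * (T ^ (A₂ + 1) - (T - τ) ^ (A₂ + 1) - τ ^ (A₂ + 1)) / (A₂ + 1)))
        * T / (τ * (p * T ^ A₁ + (1 - p) * T ^ A₂)))
      atTop (nhds 1) := by
  obtain ⟨hp0, hp1⟩ := hp
  have hA2 : 0 < A₂ := hA1.trans hA12
  have hq : 0 < 1 - p := by linarith
  have hr1 := aux_r A₁ τ hA1 hτ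
  have hr2 := aux_r A₂ τ hA2 hτ
  -- weight tends to 0
  have hw : Tendsto (fun T : ℝ => p * T ^ A₁ / (p * T ^ A₁ + (1 - p) * T ^ A₂))
      atTop (nhds 0) := by
    have hsimp : Tendsto (fun T : ℝ => p / (p + (1 - p) * T ^ (A₂ - A₁))) atTop (nhds 0) := by
      refine tendsto_const_nhds.div_atTop ?_
      exact tendsto_atTop_add_const_left _ p
        ((tendsto_rpow_atTop (by linarith)).const_mul_atTop hq)
    refine hsimp.congr' ?_
    filter_upwards [eventually_gt_atTop 0] with T hT0
    have hTa1 : (0:ℝ) < T ^ A₁ := Real.rpow_pos_of_pos hT0 _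
    have e : T ^ A₂ = T ^ A₁ * T ^ (A₂ - A₁) := by
      rw [← Real.rpow_add hT0]; ring_nf
    rw [e]
    rw [show p * T ^ A₁ + (1 - p) * (T ^ A₁ * T ^ (A₂ - A₁))
        = T ^ A₁ * (p + (1 - p) * T ^ (A₂ - A₁)) by ring,
      show p * T ^ A₁ = T ^ A₁ * p by ring,
      mul_div_mul_left _ _ hTa1.ne']
  -- combine
  have hcomb : Tendsto (fun T : ℝ =>
      (p * T ^ A₁ / (p * T ^ A₁ + (1 - p) * T ^ A₂)) *
        ((T ^ (A₁ + 1) - (T - τ) ^ (A₁ + 1) - τ ^ (A₁ + 1)) * T / ((A₁ + 1) * (T - τ) * τ * T ^ A₁))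
      + (1 - p * T ^ A₁ / (p * T ^ A₁ + (1 - p) * T ^ A₂)) *
        ((T ^ (A₂ + 1) - (T - τ) ^ (A₂ + 1) - τ ^ (A₂ + 1)) * T / ((A₂ + 1) * (T - τ) * τ * T ^ A₂)))
      atTop (nhds (0 * 1 + (1 - 0) * 1)) :=
    (hw.mul hr1).add ((tendsto_const_nhds.sub hw).mul hr2)
  norm_num at hcomb
  refine hcomb.congr' ?_
  filter_upwards [eventually_gt_atTop τ] with T hT
  have hT0 : (0:ℝ) < T := hτ.trans hT
  have hTτ : (0:ℝ) < T - τ := by linarith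
  have hTa1 : (0:ℝ) < T ^ A₁ := Real.rpow_pos_of_pos hT0 _
  have hTa2 : (0:ℝ) < T ^ A₂ := Real.rpow_pos_of_pos hT0 _
  have hD : (0:ℝ) < p * T ^ A₁ + (1 - p) * T ^ A₂ := by positivity
  have hA1' : (0:ℝ) < A₁ + 1 := by linarith
  have hA2' : (0:ℝ) < A₂ + 1 := by linarith
  field_simp
  ring
end

section
/- Fix 0 < A₁ < A₂, p ∈ (0,1) and τ > 0. For a > 0 and T > τ define E_a(T) = (T^{a+1} − τ^{a+1} − (T−τ)^{a+1}) / ((a+1)(T−τ)) and N_a(T) = (4τ^{2a+2}/(T−τ)²) · [ (T/τ − 1)^{2a+1}/(2a+1) + (3a+1)(T/τ − 1)^{2a+2}/(2(a+1)²(2a+1)) − 2(T/τ)^{a+1}(T/τ − 1)^{a+1}/(a+1)² + (T/τ)^{2a+2}/(2(a+1)(2a+1)) − (2a²+a+1)/(2(a+1)²(2a+1)) + (2/(a+1)) ∫₀^{T/τ−1} x^{a+1}(x+1)^a dx ]. Define the ergodicity breaking parameter EB(T) = [ p·N_{A₁}(T) + (1−p)·N_{A₂}(T) + p(1−p)·(E_{A₁}(T)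 − E_{A₂}(T))² ] / ( p·E_{A₁}(T) + (1−p)·E_{A₂}(T) )². Then lim_{T→∞} EB(T) = p/(1−p). -/
open MeasureTheory ProbabilityTheory Filter Real

/-- Expected TAMSD of scaled Brownian motion with exponent `a`, lag `τ`,
trajectory length `T`. -/
noncomputable def sbmTamsd (τ a T : ℝ) : ℝ :=
  (T ^ (a + 1) - τ ^ (a + 1) - (T - τ) ^ (a + 1)) / ((a + 1) * (T - τ))

/-- Variance of the TAMSD of scaled Brownian motion with exponent `a`, lag `τ`,
trajectory length `T`. -/
noncomputable def sbmTamsdVar (τ a T : ℝ) : ℝ :=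
  4 * τ ^ (2 * a + 2) / (T - τ) ^ 2 *
    ((T / τ - 1) ^ (2 * a + 1) / (2 * a + 1)
      + (3 * a + 1) * (T / τ - 1) ^ (2 * a + 2) / (2 * (a + 1) ^ 2 * (2 * a + 1))
      - 2 * (T / τ) ^ (a + 1) * (T / τ - 1) ^ (a + 1) / (a + 1) ^ 2
      + (T / τ) ^ (2 * a + 2) / (2 * (a + 1) * (2 * a + 1))
      - (2 * a ^ 2 + a + 1) / (2 * (a + 1) ^ 2 * (2 * a + 1))
      + 2 / (a + 1) * ∫ x in (0:ℝ)..(T / τ - 1), x ^ (a + 1) * (x + 1) ^ a)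

/-- The ergodicity breaking parameter of the SBMRE with two-point distributed
exponent (value `A₁` with probability `p`, `A₂` with probability `1 − p`). -/
noncomputable def sbmreTwoPointEB (A₁ A₂ p τ T : ℝ) : ℝ :=
  (p * sbmTamsdVar τ A₁ T + (1 - p) * sbmTamsdVar τ A₂ T
      + p * (1 - p) * (sbmTamsd τ A₁ T - sbmTamsd τ A₂ T) ^ 2)
    / (p * sbmTamsd τ A₁ T + (1 - p) * sbmTamsd τ A₂ T) ^ 2


open Filter Set


noncomputable def psi0 (a y : ℝ) : ℝ :=
  y ^ (2*a) - (2*a^2/((a+1)*(2*a+1))) * y ^ (2*a+1) - (2/(a+1)) * y ^ a + 1/(2*a+1)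

noncomputable def psi1 (a y : ℝ) : ℝ :=
  2*a * y ^ (2*a-1) - (2*a^2/(a+1)) * y ^ (2*a) - (2*a/(a+1)) * y ^ (a-1)

noncomputable def psi2 (a y : ℝ) : ℝ :=
  2*a*(2*a-1) * y ^ (2*a-2) - (4*a^3/(a+1)) * y ^ (2*a-1) - (2*a*(a-1)/(a+1)) * y ^ (a-2)

noncomputable def psi3 (a y : ℝ) : ℝ :=
  2*a*(2*a-1)*(2*a-2) * y ^ (2*a-3) - (4*a^3*(2*a-1)/(a+1)) * y ^ (2*a-2)
    - (2*a*(a-1)*(a-2)/(a+1)) * y ^ (a-3)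

lemma hasDerivAt_rpow_c {y p : ℝ} (hy : y ≠ 0) :
    HasDerivAt (fun x : ℝ => x ^ p) (p * y ^ (p-1)) y :=
  Real.hasDerivAt_rpow_const (Or.inl hy)

lemma hasDerivAt_psi0 (a : ℝ) (ha : 0 < a) {y : ℝ} (hy : y ≠ 0) :
    HasDerivAt (psi0 a) (psi1 a y) y := by
  have h1 := hasDerivAt_rpow_c (p := 2*a) hy
  have h2 := hasDerivAt_rpow_c (p := 2*a+1) hy
  have h3 := hasDerivAt_rpow_c (p := a) hy
  have ha1 : a + 1 ≠ 0 := by positivity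
  have ha2 : 2*a + 1 ≠ 0 := by positivity
  have := ((h1.sub ((h2.const_mul (2*a^2/((a+1)*(2*a+1))))) ).sub
      (h3.const_mul (2/(a+1)))).add_const (1/(2*a+1))
  have hval : 2 * a * y ^ (2*a - 1) - 2*a^2/((a+1)*(2*a+1)) * ((2*a+1) * y ^ (2*a+1-1))
      - 2/(a+1) * (a * y ^ (a-1)) = psi1 a y := by
    have e1 : 2*a+1-1 = 2*a := by ring
    rw [e1]; simp only [psi1]; field_simp
  have this2 := (((h1.sub (((hasDerivAt_rpow_c (p := 2*a+1) hy)).const_mul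
      (2*a^2/((a+1)*(2*a+1))))).sub (h3.const_mul (2/(a+1)))).add_const (1/(2*a+1)))
  exact hval ▸ this2

lemma hasDerivAt_psi1 (a : ℝ) (ha : 0 < a) {y : ℝ} (hy : y ≠ 0) :
    HasDerivAt (psi1 a) (psi2 a y) y := by
  have h1 := hasDerivAt_rpow_c (p := 2*a-1) hy
  have h2 := hasDerivAt_rpow_c (p := 2*a) hy
  have h3 := hasDerivAt_rpow_c (p := a-1) hy
  have ha1 : a + 1 ≠ 0 := by positivity
  have := ((h1.const_mul (2*a)).sub (h2.const_mul (2*a^2/(a+1)))).sub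
      (h3.const_mul (2*a/(a+1)))
  have hval : 2*a * ((2*a-1) * y ^ (2*a-1-1)) - 2*a^2/(a+1) * (2*a * y ^ (2*a-1))
      - 2*a/(a+1) * ((a-1) * y ^ (a-1-1)) = psi2 a y := by
    have e1 : 2*a-1-1 = 2*a-2 := by ring
    have e2 : a-1-1 = a-2 := by ring
    rw [e1, e2]; simp only [psi2]; field_simp; ring
  exact hval ▸ this

lemma hasDerivAt_psi2 (a : ℝ) (ha : 0 < a) {y : ℝ} (hy : y ≠ 0) :
    HasDerivAt (psi2 a) (psi3 a y) y := by
  have h1 := hasDerivAt_rpow_c (p := 2*a-2) hy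
  have h2 := hasDerivAt_rpow_c (p := 2*a-1) hy
  have h3 := hasDerivAt_rpow_c (p := a-2) hy
  have ha1 : a + 1 ≠ 0 := by positivity
  have := ((h1.const_mul (2*a*(2*a-1))).sub (h2.const_mul (4*a^3/(a+1)))).sub
      (h3.const_mul (2*a*(a-1)/(a+1)))
  have hval : 2*a*(2*a-1) * ((2*a-2) * y ^ (2*a-2-1)) - 4*a^3/(a+1) * ((2*a-1) * y ^ (2*a-1-1))
      - 2*a*(a-1)/(a+1) * ((a-2) * y ^ (a-2-1)) = psi3 a y := by
    have e1 : 2*a-2-1 = 2*a-3 := by ring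
    have e2 : 2*a-1-1 = 2*a-2 := by ring
    have e3 : a-2-1 = a-3 := by ring
    rw [e1, e2, e3]; simp only [psi3]; field_simp
  exact hval ▸ this

lemma psi0_one (a : ℝ) (ha : 0 < a) : psi0 a 1 = 0 := by
  have ha1 : a + 1 ≠ 0 := by positivity
  have ha2 : 2*a + 1 ≠ 0 := by positivity
  simp only [psi0, Real.one_rpow]
  field_simp
  ring

lemma psi1_one (a : ℝ) (ha : 0 < a) : psi1 a 1 = 0 := by
  have ha1 : a + 1 ≠ 0 := by positivity
  simp only [psi1, Real.one_rpow]
  field_simp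
  ring

lemma psi2_one (a : ℝ) (ha : 0 < a) : psi2 a 1 = 0 := by
  have ha1 : a + 1 ≠ 0 := by positivity
  simp only [psi2, Real.one_rpow]
  field_simp
  ring

noncomputable def Mb (a : ℝ) : ℝ := 8 * (2*a+2)^3 * 4

lemma rpow_le_eight {y t : ℝ} (hy : y ∈ Icc (1/2 : ℝ) 1) (ht : -3 ≤ t) : y ^ t ≤ 8 := by
  obtain ⟨h1, h2⟩ := hy
  have hy0 : 0 < y := by linarith
  calc y ^ t ≤ y ^ (-3 : ℝ) := Real.rpow_le_rpow_of_exponent_ge hy0 h2 ht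
  _ = (y ^ (3:ℕ))⁻¹ := by
      rw [← Real.rpow_natCast y 3, ← Real.rpow_neg hy0.le]; norm_num
  _ ≤ 8 := by
      rw [inv_le_comm₀ (by positivity) (by norm_num)]
      calc (8:ℝ)⁻¹ = (1/2)^3 := by norm_num
      _ ≤ y ^ 3 := pow_le_pow_left₀ (by norm_num) h1 3

lemma psi3_bound (a : ℝ) (ha : 0 < a) {y : ℝ} (hy : y ∈ Icc (1/2 : ℝ) 1) :
    |psi3 a y| ≤ Mb a := by
  have ha1 : (0:ℝ) < a + 1 := by linarith
  have b1 : y ^ (2*a-3) ≤ 8 := rpow_le_eight hy (by linarith)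
  have b2 : y ^ (2*a-2) ≤ 8 := rpow_le_eight hy (by linarith)
  have b3 : y ^ (a-3) ≤ 8 := rpow_le_eight hy (by linarith)
  have hy0 : (0:ℝ) < y := by
    have := hy.1; linarith
  have p1 : (0:ℝ) ≤ y ^ (2*a-3) := (Real.rpow_pos_of_pos hy0 _).le
  have p2 : (0:ℝ) ≤ y ^ (2*a-2) := (Real.rpow_pos_of_pos hy0 _).le
  have p3 : (0:ℝ) ≤ y ^ (a-3) := (Real.rpow_pos_of_pos hy0 _).le
  have c1 : |2*a*(2*a-1)*(2*a-2)| ≤ (2*a+2)^3 := by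
    rw [abs_le]; constructor <;> nlinarith [abs_nonneg (2*a-1), sq_nonneg (2*a-1), sq_nonneg a, sq_nonneg (a-1), sq_nonneg (a+1)]
  have c2 : |4*a^3*(2*a-1)/(a+1)| ≤ (2*a+2)^3 := by
    rw [abs_div, abs_of_pos ha1, div_le_iff₀ ha1, abs_le]
    constructor <;> nlinarith [sq_nonneg a, sq_nonneg (a-1), sq_nonneg (a+1), sq_nonneg (a*(a-1)), sq_nonneg (a*(a+1)), sq_nonneg (a^2-1)]
  have c3 : |2*a*(a-1)*(a-2)/(a+1)| ≤ (2*a+2)^3 := by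
    rw [abs_div, abs_of_pos ha1, div_le_iff₀ ha1, abs_le]
    constructor <;> nlinarith [sq_nonneg a, sq_nonneg (a-1), sq_nonneg (a-2), sq_nonneg (a+1), sq_nonneg (a^2-1), sq_nonneg (a^2-2*a), sq_nonneg (a^2-3*a+2), sq_nonneg (a^2+3*a-2)]
  have habs : ∀ (c : ℝ) (u : ℝ), 0 ≤ u → u ≤ 8 → |c| ≤ (2*a+2)^3 → |c * u| ≤ 8 * (2*a+2)^3 := by
    intro c u hu hu8 hc
    rw [abs_mul, abs_of_nonneg hu]
    calc |c| * u ≤ (2*a+2)^3 * 8 := by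
          apply mul_le_mul hc hu8 hu (by positivity)
    _ = 8 * (2*a+2)^3 := by ring
  have := habs _ _ p1 b1 c1
  have := habs _ _ p2 b2 c2
  have := habs _ _ p3 b3 c3
  simp only [psi3, Mb]
  calc |2*a*(2*a-1)*(2*a-2) * y ^ (2*a-3) - (4*a^3*(2*a-1)/(a+1)) * y ^ (2*a-2)
        - (2*a*(a-1)*(a-2)/(a+1)) * y ^ (a-3)|
      ≤ |2*a*(2*a-1)*(2*a-2) * y ^ (2*a-3)| + |(4*a^3*(2*a-1)/(a+1)) * y ^ (2*a-2)|
        + |(2*a*(a-1)*(a-2)/(a+1)) * y ^ (a-3)| := by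
        apply (abs_sub _ _).trans
        gcongr
        exact abs_sub _ _
  _ ≤ 8*(2*a+2)^3 + 8*(2*a+2)^3 + 8*(2*a+2)^3 := by gcongr <;> assumption
  _ ≤ 8 * (2*a+2)^3 * 4 := by nlinarith [sq_nonneg (a+1), pow_pos (by linarith : (0:ℝ) < 2*a+2) 3]

lemma Mb_nonneg (a : ℝ) (ha : 0 < a) : 0 ≤ Mb a := by
  simp only [Mb]; positivity

lemma psi2_bound (a : ℝ) (ha : 0 < a) {y : ℝ} (hy : y ∈ Icc (1/2 : ℝ) 1) :
    |psi2 a y| ≤ Mb a * (1 - y) := by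
  have h := Convex.norm_image_sub_le_of_norm_hasDerivWithin_le
    (f := psi2 a) (f' := psi3 a) (s := Icc (1/2 : ℝ) 1) (C := Mb a) (x := 1) (y := y)
    (fun t ht => (hasDerivAt_psi2 a ha (by intro h; rw [h] at ht; exact absurd ht.1 (by norm_num))).hasDerivWithinAt)
    (fun t ht => by rw [Real.norm_eq_abs]; exact psi3_bound a ha ht)
    (convex_Icc _ _) (right_mem_Icc.mpr (by norm_num)) hy
  rw [psi2_one a ha, sub_zero, Real.norm_eq_abs, Real.norm_eq_abs] at h
  have : |y - 1| = 1 - y := by rw [abs_of_nonpos (by linarith [hy.2])]; ring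
  rwa [this] at h

lemma psi1_bound (a : ℝ) (ha : 0 < a) {y : ℝ} (hy : y ∈ Icc (1/2 : ℝ) 1) :
    |psi1 a y| ≤ Mb a * (1 - y)^2 := by
  have h := Convex.norm_image_sub_le_of_norm_hasDerivWithin_le
    (f := psi1 a) (f' := psi2 a) (s := Icc y 1) (C := Mb a * (1 - y))
    (fun t ht => (hasDerivAt_psi1 a ha (by
        intro h; rw [h] at ht; linarith [ht.1, hy.1])).hasDerivWithinAt)
    (fun t ht => by
      rw [Real.norm_eq_abs]
      have ht' : t ∈ Icc (1/2 : ℝ) 1 := ⟨le_trans hy.1 ht.1, ht.2⟩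
      calc |psi2 a t| ≤ Mb a * (1 - t) := psi2_bound a ha ht'
      _ ≤ Mb a * (1 - y) := by
          apply mul_le_mul_of_nonneg_left (by linarith [ht.1]) (Mb_nonneg a ha))
    (convex_Icc _ _) (right_mem_Icc.mpr hy.2) (left_mem_Icc.mpr hy.2)
  rw [psi1_one a ha, sub_zero, Real.norm_eq_abs, Real.norm_eq_abs] at h
  have : |y - 1| = 1 - y := by rw [abs_of_nonpos (by linarith [hy.2])]; ring
  rw [this] at h
  calc |psi1 a y| ≤ Mb a * (1 - y) * (1 - y) := h
  _ = Mb a * (1 - y)^2 := by ring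

lemma psi0_bound (a : ℝ) (ha : 0 < a) {y : ℝ} (hy : y ∈ Icc (1/2 : ℝ) 1) :
    |psi0 a y| ≤ Mb a * (1 - y)^3 := by
  have h := Convex.norm_image_sub_le_of_norm_hasDerivWithin_le
    (f := psi0 a) (f' := psi1 a) (s := Icc y 1) (C := Mb a * (1 - y)^2)
    (fun t ht => (hasDerivAt_psi0 a ha (by
        intro h; rw [h] at ht; linarith [ht.1, hy.1])).hasDerivWithinAt)
    (fun t ht => by
      rw [Real.norm_eq_abs]
      have ht' : t ∈ Icc (1/2 : ℝ) 1 := ⟨le_trans hy.1 ht.1, ht.2⟩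
      calc |psi1 a t| ≤ Mb a * (1 - t)^2 := psi1_bound a ha ht'
      _ ≤ Mb a * (1 - y)^2 := by
          apply mul_le_mul_of_nonneg_left _ (Mb_nonneg a ha)
          apply pow_le_pow_left₀ (by linarith [ht.2]) (by linarith [ht.1]))
    (convex_Icc _ _) (right_mem_Icc.mpr hy.2) (left_mem_Icc.mpr hy.2)
  rw [psi0_one a ha, sub_zero, Real.norm_eq_abs, Real.norm_eq_abs] at h
  have : |y - 1| = 1 - y := by rw [abs_of_nonpos (by linarith [hy.2])]; ring
  rw [this] at h
  calc |psi0 a y| ≤ Mb a * (1 - y)^2 * (1 - y) := h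
  _ = Mb a * (1 - y)^3 := by ring

noncomputable def Fbr (a r : ℝ) : ℝ :=
  (r - 1) ^ (2 * a + 1) / (2 * a + 1)
    + (3 * a + 1) * (r - 1) ^ (2 * a + 2) / (2 * (a + 1) ^ 2 * (2 * a + 1))
    - 2 * r ^ (a + 1) * (r - 1) ^ (a + 1) / (a + 1) ^ 2
    + r ^ (2 * a + 2) / (2 * (a + 1) * (2 * a + 1))
    - (2 * a ^ 2 + a + 1) / (2 * (a + 1) ^ 2 * (2 * a + 1))
    + 2 / (a + 1) * ∫ x in (0:ℝ)..(r - 1), x ^ (a + 1) * (x + 1) ^ a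

noncomputable def Fd (a r : ℝ) : ℝ :=
  (r - 1) ^ (2 * a) + (3 * a + 1) * (r - 1) ^ (2 * a + 1) / ((a + 1) * (2 * a + 1))
    - 2 * r ^ (a + 1) * (r - 1) ^ a / (a + 1) + r ^ (2 * a + 1) / (2 * a + 1)

lemma hasDerivAt_shift_rpow {r : ℝ} (p : ℝ) (hr : r ≠ 1) :
    HasDerivAt (fun x : ℝ => (x - 1) ^ p) (p * (r - 1) ^ (p - 1)) r := by
  have h := Real.hasDerivAt_rpow_const (x := r - 1) (p := p) (Or.inl (sub_ne_zero.mpr hr))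
  have h2 := (hasDerivAt_id r).sub_const 1
  have := h.comp r h2
  simpa [Function.comp_def] using this

lemma continuousOn_integrand (a : ℝ) (ha : 0 < a) (b : ℝ) :
    ContinuousOn (fun x : ℝ => x ^ (a + 1) * (x + 1) ^ a) (Icc 0 b) := by
  intro x hx
  apply ContinuousAt.continuousWithinAt
  apply ContinuousAt.mul
  · rcases eq_or_ne x 0 with h | h
    · exact Real.continuousAt_rpow_const x (a + 1) (Or.inr (by linarith))
    · exact Real.continuousAt_rpow_const x (a + 1) (Or.inl h)
  · exact ContinuousAt.rpow_const (continuousAt_id.add continuousAt_const) (Or.inr ha.le)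

lemma hasDerivAt_Fbr (a : ℝ) (ha : 0 < a) {r : ℝ} (hr : 1 < r) :
    HasDerivAt (Fbr a) (Fd a r) r := by
  have hr1 : r ≠ 1 := ne_of_gt hr
  have hr0 : r ≠ 0 := by positivity
  have ha1 : (a:ℝ) + 1 ≠ 0 := by positivity
  have ha2 : 2 * a + 1 ≠ 0 := by positivity
  -- integral term
  have hint : IntervalIntegrable (fun x : ℝ => x ^ (a + 1) * (x + 1) ^ a)
      MeasureTheory.volume 0 (r - 1) := by
    apply ContinuousOn.intervalIntegrable
    rw [Set.uIcc_of_le (by linarith)]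
    exact continuousOn_integrand a ha _
  have hcont : ContinuousAt (fun x : ℝ => x ^ (a + 1) * (x + 1) ^ a) (r - 1) := by
    apply ContinuousAt.mul
    · exact Real.continuousAt_rpow_const _ _ (Or.inl (by intro h; rw [sub_eq_zero] at h; exact hr1 h))
    · exact ContinuousAt.rpow_const (continuousAt_id.add continuousAt_const) (Or.inr ha.le)
  have hmeas : StronglyMeasurableAtFilter (fun x : ℝ => x ^ (a + 1) * (x + 1) ^ a)
      (nhds (r - 1)) MeasureTheory.volume := by
    refine ContinuousAt.stronglyMeasurableAtFilter (s := Ioi 0) isOpen_Ioi ?_ _ ?_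
    · intro x hx
      apply ContinuousAt.mul
      · exact Real.continuousAt_rpow_const _ _ (Or.inl (ne_of_gt hx))
      · exact ContinuousAt.rpow_const (continuousAt_id.add continuousAt_const) (Or.inr ha.le)
    · simp only [mem_Ioi]; linarith
  have hI : HasDerivAt (fun u : ℝ => ∫ x in (0:ℝ)..u, x ^ (a + 1) * (x + 1) ^ a)
      ((r - 1) ^ (a + 1) * ((r - 1) + 1) ^ a) (r - 1) :=
    intervalIntegral.integral_hasDerivAt_right hint hmeas hcont
  have hIc : HasDerivAt (fun x : ℝ => ∫ t in (0:ℝ)..(x - 1), t ^ (a + 1) * (t + 1) ^ a)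
      ((r - 1) ^ (a + 1) * ((r - 1) + 1) ^ a) r := by
    have h2 := (hasDerivAt_id r).sub_const 1
    have := hI.comp r h2
    simpa [Function.comp_def] using this
  -- assemble
  have t1 := (hasDerivAt_shift_rpow (2 * a + 1) hr1).div_const (2 * a + 1)
  have t2 := ((hasDerivAt_shift_rpow (2 * a + 2) hr1).const_mul (3 * a + 1)).div_const
      (2 * (a + 1) ^ 2 * (2 * a + 1))
  have t3 := (((Real.hasDerivAt_rpow_const (x := r) (p := a + 1) (Or.inl hr0)).const_mul 2).mul
      (hasDerivAt_shift_rpow (a + 1) hr1)).div_const ((a + 1) ^ 2)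
  have t4 := (Real.hasDerivAt_rpow_const (x := r) (p := 2 * a + 2) (Or.inl hr0)).div_const
      (2 * (a + 1) * (2 * a + 1))
  have t6 := hIc.const_mul (2 / (a + 1))
  have big := ((((t1.add t2).sub t3).add t4).sub_const
      ((2 * a ^ 2 + a + 1) / (2 * (a + 1) ^ 2 * (2 * a + 1)))).add t6
  have hval : (2 * a + 1) * (r - 1) ^ (2 * a + 1 - 1) / (2 * a + 1)
      + (3 * a + 1) * ((2 * a + 2) * (r - 1) ^ (2 * a + 2 - 1)) / (2 * (a + 1) ^ 2 * (2 * a + 1))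
      - (2 * ((a + 1) * r ^ (a + 1 - 1)) * (r - 1) ^ (a + 1)
          + 2 * r ^ (a + 1) * ((a + 1) * (r - 1) ^ (a + 1 - 1))) / (a + 1) ^ 2
      + (2 * a + 2) * r ^ (2 * a + 2 - 1) / (2 * (a + 1) * (2 * a + 1))
      + 2 / (a + 1) * ((r - 1) ^ (a + 1) * ((r - 1) + 1) ^ a) = Fd a r := by
    have e1 : 2 * a + 1 - 1 = 2 * a := by ring
    have e2 : 2 * a + 2 - 1 = 2 * a + 1 := by ring
    have e3 : a + 1 - 1 = a := by ring
    have e4 : r - 1 + 1 = r := by ring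
    rw [e1, e2, e3, e4]
    simp only [Fd]
    field_simp
    ring
  exact hval ▸ big

lemma Fd_eq (a : ℝ) (ha : 0 < a) {r : ℝ} (hr : 1 < r) :
    Fd a r = r ^ (2 * a + 1) * psi0 a ((r - 1) / r) := by
  have hr0 : (0:ℝ) < r := by linarith
  have hs0 : (0:ℝ) < r - 1 := by linarith
  have ha1 : (a:ℝ) + 1 ≠ 0 := by positivity
  have ha2 : 2 * a + 1 ≠ 0 := by positivity
  have hP : (0:ℝ) < r ^ a := Real.rpow_pos_of_pos hr0 a
  have h2a : ∀ x : ℝ, 0 < x → x ^ (2 * a) = x ^ a * x ^ a := fun x hx => by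
    rw [show 2 * a = a + a by ring, Real.rpow_add hx]
  have h2a1 : ∀ x : ℝ, 0 < x → x ^ (2 * a + 1) = x ^ a * x ^ a * x := fun x hx => by
    rw [show 2 * a + 1 = a + a + 1 by ring, Real.rpow_add hx, Real.rpow_add hx, Real.rpow_one]
  have hA1 : ∀ x : ℝ, 0 < x → x ^ (a + 1) = x ^ a * x := fun x hx => by
    rw [Real.rpow_add hx, Real.rpow_one]
  have hy0 : (0:ℝ) < (r - 1) / r := by positivity
  have hyd : ∀ z : ℝ, ((r - 1) / r) ^ z = (r - 1) ^ z / r ^ z :=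
    fun z => Real.div_rpow hs0.le hr0.le z
  simp only [Fd, psi0, hyd]
  rw [h2a _ hs0, h2a1 _ hs0, hA1 _ hr0, h2a1 _ hr0, h2a _ hr0]
  field_simp
  ring

lemma Fd_bound (a : ℝ) (ha : 0 < a) {r : ℝ} (hr : 2 ≤ r) :
    |Fd a r| ≤ Mb a * r ^ (2 * a - 2) := by
  have hr0 : (0:ℝ) < r := by linarith
  have hy : (r - 1) / r ∈ Icc (1/2 : ℝ) 1 := by
    constructor
    · rw [le_div_iff₀ hr0]; linarith
    · rw [div_le_one hr0]; linarith
  have h1 : 1 - (r - 1) / r = 1 / r := by field_simp; ring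
  have hpsi := psi0_bound a ha hy
  rw [h1] at hpsi
  have := Fd_eq a ha (by linarith : 1 < r)
  rw [this, abs_mul, abs_of_pos (Real.rpow_pos_of_pos hr0 _)]
  calc r ^ (2 * a + 1) * |psi0 a ((r - 1) / r)| ≤ r ^ (2 * a + 1) * (Mb a * (1 / r) ^ 3) := by
        apply mul_le_mul_of_nonneg_left hpsi (Real.rpow_pos_of_pos hr0 _).le
  _ = Mb a * r ^ (2 * a - 2) := by
      have h3 : r ^ (2 * a - 2) = r ^ (2 * a + 1) / r ^ (3:ℕ) := by
        rw [← Real.rpow_natCast r 3, ← Real.rpow_sub hr0]; norm_num; ring_nf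
      rw [h3]
      have : r ^ (3:ℕ) ≠ 0 := by positivity
      field_simp

noncomputable def gam (a : ℝ) : ℝ := max (2 * a - 1) a

lemma gam_pos (a : ℝ) (ha : 0 < a) : 0 < gam a := lt_max_of_lt_right ha

lemma Fbr_bound (a : ℝ) (ha : 0 < a) :
    ∀ r : ℝ, 2 ≤ r → |Fbr a r| ≤ |Fbr a 2| + Mb a / gam a * r ^ gam a := by
  have hγ := gam_pos a ha
  set G : ℝ → ℝ := fun r => Mb a / gam a * r ^ gam a with hG
  have hGd : ∀ x : ℝ, 0 < x → HasDerivAt G (Mb a * x ^ (gam a - 1)) x := by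
    intro x hx
    have := (Real.hasDerivAt_rpow_const (x := x) (p := gam a) (Or.inl (ne_of_gt hx))).const_mul
      (Mb a / gam a)
    refine this.congr_deriv ?_
    rw [← mul_assoc, div_mul_cancel₀ _ hγ.ne']
  have hFd' : ∀ x : ℝ, 2 ≤ x → |Fd a x| ≤ Mb a * x ^ (gam a - 1) := by
    intro x hx
    calc |Fd a x| ≤ Mb a * x ^ (2 * a - 2) := Fd_bound a ha hx
    _ ≤ Mb a * x ^ (gam a - 1) := by
        apply mul_le_mul_of_nonneg_left _ (Mb_nonneg a ha)
        apply Real.rpow_le_rpow_of_exponent_le (by linarith)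
        have : 2 * a - 1 ≤ gam a := le_max_left _ _
        linarith
  -- monotone G - Fbr and G + Fbr on Ici 2
  have hmono : ∀ (ε : ℝ), ε = 1 ∨ ε = -1 →
      MonotoneOn (fun x => G x + ε * Fbr a x) (Ici (2:ℝ)) := by
    intro ε hε
    apply monotoneOn_of_deriv_nonneg (convex_Ici 2)
    · intro x hx
      have hx2 : (2:ℝ) ≤ x := hx
      exact ((hGd x (by linarith)).add (((hasDerivAt_Fbr a ha (by linarith)).const_mul ε))).continuousAt.continuousWithinAt
    · intro x hx
      rw [interior_Ici] at hx
      have hx2 : (2:ℝ) < x := hx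
      exact ((hGd x (by linarith)).add (((hasDerivAt_Fbr a ha (by linarith)).const_mul ε))).differentiableAt.differentiableWithinAt
    · intro x hx
      rw [interior_Ici] at hx
      have hx2 : (2:ℝ) < x := hx
      have hd := (hGd x (by linarith)).add ((hasDerivAt_Fbr a ha (by linarith)).const_mul ε)
      rw [show deriv (fun x => G x + ε * Fbr a x) x = _ from hd.deriv]
      have := hFd' x hx2.le
      rcases hε with h | h <;> rw [h] <;> rw [abs_le] at this <;> simp <;> linarith [this.1, this.2]
  intro r hr
  have h1 := hmono 1 (Or.inl rfl) self_mem_Ici (mem_Ici.mpr hr) hr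
  have h2 := hmono (-1) (Or.inr rfl) self_mem_Ici (mem_Ici.mpr hr) hr
  simp only [one_mul, neg_one_mul] at h1 h2
  have hG2 : 0 ≤ G 2 := by
    apply mul_nonneg (div_nonneg (Mb_nonneg a ha) hγ.le)
    exact (Real.rpow_pos_of_pos (by norm_num) _).le
  have habs : |Fbr a 2| ≤ |Fbr a 2| := le_rfl
  rw [abs_le]
  constructor
  · -- -(|Fbr a 2| + G r) ≤ Fbr a r
    have : G 2 + Fbr a 2 ≤ G r + Fbr a r := h1
    have h3 : -(|Fbr a 2|) ≤ Fbr a 2 := neg_abs_le _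
    simp only [hG] at *
    nlinarith [abs_nonneg (Fbr a 2)]
  · have : G 2 - Fbr a 2 ≤ G r - Fbr a r := h2
    have h3 : Fbr a 2 ≤ |Fbr a 2| := le_abs_self _
    simp only [hG] at *
    nlinarith [abs_nonneg (Fbr a 2)]

lemma tamsd_eq (τ a T : ℝ) :
    sbmTamsd τ a T = (T ^ (a+1) - τ ^ (a+1) - (T - τ) ^ (a+1)) / ((a+1) * (T - τ)) := rfl

lemma var_eq (τ a T : ℝ) :
    sbmTamsdVar τ a T = 4 * τ ^ (2*a+2) / (T - τ) ^ 2 * Fbr a (T / τ) := rfl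

lemma q_tendsto (a : ℝ) (ha : 0 < a) :
    Tendsto (fun x : ℝ => (1 - (1 - x) ^ (a+1)) / x) (nhdsWithin 0 {(0:ℝ)}ᶜ) (nhds (a+1)) := by
  have hf : HasDerivAt (fun x : ℝ => (1 - x) ^ (a+1)) (-(a+1)) 0 := by
    have h1 : HasDerivAt (fun x : ℝ => 1 - x) (-1) 0 := (hasDerivAt_id 0).const_sub 1
    have h2 := Real.hasDerivAt_rpow_const (x := (1:ℝ) - 0) (p := a+1)
      (Or.inl (by norm_num))
    have := h2.comp 0 h1
    simpa [Function.comp_def] using this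
  have hs := hasDerivAt_iff_tendsto_slope.mp hf
  have := hs.neg
  rw [show -(-(a+1)) = a + 1 by ring] at this
  apply this.congr
  intro x
  rw [slope_def_field]
  simp [Real.one_rpow]
  ring

lemma tamsd_div_tendsto (a τ : ℝ) (ha : 0 < a) (hτ : 0 < τ) :
    Tendsto (fun T : ℝ => sbmTamsd τ a T / T ^ (a-1)) atTop (nhds τ) := by
  have ha1 : (0:ℝ) < a + 1 := by linarith
  have hx : Tendsto (fun T : ℝ => τ / T) atTop (nhdsWithin 0 {(0:ℝ)}ᶜ) := by
    rw [tendsto_nhdsWithin_iff]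
    constructor
    · exact tendsto_const_nhds.div_atTop tendsto_id
    · filter_upwards [eventually_gt_atTop 0] with T hT
      simp only [mem_compl_iff, mem_singleton_iff]
      positivity
  have hq : Tendsto (fun T : ℝ => (1 - (1 - τ/T) ^ (a+1)) / (τ/T)) atTop (nhds (a+1)) := by
    have := (q_tendsto a ha).comp hx
    apply this.congr
    intro T
    simp [Function.comp]
  have hT1 : Tendsto (fun T : ℝ => T / (T - τ)) atTop (nhds 1) := by
    have h0 : Tendsto (fun T : ℝ => τ / (T - τ)) atTop (nhds 0) :=
      tendsto_const_nhds.div_atTop (tendsto_atTop_add_const_right _ (-τ) tendsto_id)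
    have h1 := h0.const_add 1
    rw [add_zero] at h1
    apply h1.congr'
    filter_upwards [eventually_gt_atTop (τ+1)] with T hT
    have : T - τ ≠ 0 := by intro h; rw [sub_eq_zero] at h; linarith
    field_simp; ring
  have hsec : Tendsto (fun T : ℝ => τ^(a+1) * T ^ (1-a) / ((a+1) * (T - τ)))
      atTop (nhds 0) := by
    have hg : Tendsto (fun T : ℝ => (2 * τ^(a+1) / (a+1)) * T ^ (-a)) atTop (nhds 0) := by
      have := (tendsto_rpow_neg_atTop ha).const_mul (2 * τ^(a+1) / (a+1))
      simpa using this
    apply squeeze_zero_norm' _ hg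
    filter_upwards [eventually_ge_atTop (max (2*τ) 1)] with T hT
    have hT2 : 2*τ ≤ T := le_trans (le_max_left _ _) hT
    have hT1' : (1:ℝ) ≤ T := le_trans (le_max_right _ _) hT
    have hT0 : (0:ℝ) < T := by linarith
    have hTτ : (0:ℝ) < T - τ := by linarith
    have hτa : (0:ℝ) < τ^(a+1) := Real.rpow_pos_of_pos hτ _
    have hTr : (0:ℝ) < T ^ (1-a) := Real.rpow_pos_of_pos hT0 _
    rw [Real.norm_eq_abs, abs_of_nonneg (by positivity)]
    have key : T ^ (1-a) / (T - τ) ≤ 2 * T ^ (-a) := by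
      have h2 : T / 2 ≤ T - τ := by linarith
      have h3 : T ^ (1-a) / (T - τ) ≤ T ^ (1-a) / (T / 2) :=
        div_le_div_of_nonneg_left hTr.le (by linarith) h2
      have h4 : T ^ (-a) = T ^ (1-a) / T := by
        rw [show -a = 1 - a - 1 by ring, Real.rpow_sub hT0, Real.rpow_one]
      rw [h4]
      calc T ^ (1-a) / (T - τ) ≤ T ^ (1-a) / (T / 2) := h3
      _ = 2 * (T ^ (1-a) / T) := by field_simp
    have hne1 : (a:ℝ) + 1 ≠ 0 := ne_of_gt ha1
    have hne2 : T - τ ≠ 0 := ne_of_gt hTτ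
    calc τ^(a+1) * T ^ (1-a) / ((a+1) * (T - τ))
        = (τ^(a+1) / (a+1)) * (T ^ (1-a) / (T - τ)) := by field_simp
    _ ≤ (τ^(a+1) / (a+1)) * (2 * T ^ (-a)) := by
        apply mul_le_mul_of_nonneg_left key (by positivity)
    _ = 2 * τ^(a+1) / (a+1) * T ^ (-a) := by ring
  have hcomb := ((hq.const_mul (τ/(a+1))).mul hT1).sub hsec
  have hval : τ/(a+1) * (a+1) * 1 - 0 = τ := by field_simp; ring
  rw [hval] at hcomb
  apply hcomb.congr'
  filter_upwards [eventually_ge_atTop (max (2*τ) 1)] with T hT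
  have hT2 : 2*τ ≤ T := le_trans (le_max_left _ _) hT
  have hT1' : (1:ℝ) ≤ T := le_trans (le_max_right _ _) hT
  have hT0 : (0:ℝ) < T := by linarith
  have hTτ : (0:ℝ) < T - τ := by linarith
  have hTτ' : T - τ ≠ 0 := ne_of_gt hTτ
  have hx0 : (0:ℝ) < 1 - τ/T := by
    rw [sub_pos, div_lt_one hT0]; linarith
  have e1 : T ^ (a+1) = T ^ (a-1) * T^(2:ℕ) := by
    rw [← Real.rpow_natCast T 2, ← Real.rpow_add hT0]
    congr 1
    push_cast
    ring
  have e2 : T ^ (1-a) * T ^ (a-1) = 1 := by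
    rw [← Real.rpow_add hT0]
    norm_num
  have e3 : (T - τ) ^ (a+1) = T ^ (a+1) * (1 - τ/T) ^ (a+1) := by
    rw [show T - τ = T * (1 - τ/T) by field_simp, Real.mul_rpow hT0.le hx0.le]
  have hu : T ^ (a-1) ≠ 0 := by positivity
  have e4 : T ^ (1-a) = 1 / T ^ (a-1) := by
    rw [eq_div_iff hu]
    exact e2
  rw [tamsd_eq, e3, e1, e4]
  field_simp
  ring

lemma var_div_tendsto (a b τ : ℝ) (ha : 0 < a) (hb : 0 < b) (hγ : gam a < 2*b) (hτ : 0 < τ) :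
    Tendsto (fun T : ℝ => sbmTamsdVar τ a T / T ^ (2*b - 2)) atTop (nhds 0) := by
  set C := |Fbr a 2| with hC
  set K := Mb a / gam a with hK
  have hK0 : 0 ≤ K := div_nonneg (Mb_nonneg a ha) (gam_pos a ha).le
  have hC0 : 0 ≤ C := abs_nonneg _
  have hg : Tendsto (fun T : ℝ => 16 * τ^(2*a+2) *
      (C * T ^ (-(2*b)) + K * τ ^ (-(gam a)) * T ^ (gam a - 2*b))) atTop (nhds 0) := by
    have h1 : Tendsto (fun T : ℝ => T ^ (-(2*b))) atTop (nhds 0) :=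
      tendsto_rpow_neg_atTop (by linarith)
    have h2 : Tendsto (fun T : ℝ => T ^ (gam a - 2*b)) atTop (nhds 0) := by
      have := tendsto_rpow_neg_atTop (y := 2*b - gam a) (by linarith)
      apply this.congr
      intro T
      congr 1
      ring
    have := ((h1.const_mul C).add (h2.const_mul (K * τ ^ (-(gam a))))).const_mul
      (16 * τ^(2*a+2))
    simpa using this
  apply squeeze_zero_norm' _ hg
  filter_upwards [eventually_ge_atTop (max (2*τ) (max (2*τ*1) 1))] with T hT
  have hT2τ : 2*τ ≤ T := le_trans (le_max_left _ _) hT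
  have hT1 : (1:ℝ) ≤ T := le_trans (le_trans (le_max_right _ _) (le_max_right _ _)) hT
  have hT0 : (0:ℝ) < T := by linarith
  have hTτ : (0:ℝ) < T - τ := by linarith
  have hr2 : (2:ℝ) ≤ T / τ := by rw [le_div_iff₀ hτ]; linarith
  have hr0 : (0:ℝ) < T / τ := by linarith
  have hFb := Fbr_bound a ha (T / τ) hr2
  have hpow : (0:ℝ) < T ^ (2*b-2) := Real.rpow_pos_of_pos hT0 _
  have hτp : (0:ℝ) < τ^(2*a+2) := Real.rpow_pos_of_pos hτ _
  rw [Real.norm_eq_abs, var_eq, abs_div, abs_of_pos hpow, abs_mul,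
    abs_of_pos (by positivity : (0:ℝ) < 4 * τ^(2*a+2) / (T - τ)^2)]
  have hFb' : |Fbr a (T / τ)| ≤ C + K * (T ^ gam a * τ ^ (-(gam a))) := by
    have e : (T/τ) ^ gam a = T ^ gam a * τ ^ (-(gam a)) := by
      rw [Real.div_rpow hT0.le hτ.le, Real.rpow_neg hτ.le, div_eq_mul_inv]
    rw [← e]
    exact hFb
  have hN0 : 0 ≤ C + K * (T ^ gam a * τ ^ (-(gam a))) := by positivity
  have hsq : (T/2)^2 ≤ (T - τ)^2 := by
    apply pow_le_pow_left₀ (by linarith) (by linarith)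
  calc 4 * τ^(2*a+2) / (T - τ)^2 * |Fbr a (T / τ)| / T ^ (2*b-2)
      ≤ 4 * τ^(2*a+2) / (T - τ)^2 * (C + K * (T ^ gam a * τ ^ (-(gam a)))) / T ^ (2*b-2) := by
        gcongr
  _ ≤ 4 * τ^(2*a+2) / ((T/2)^2) * (C + K * (T ^ gam a * τ ^ (-(gam a)))) / T ^ (2*b-2) := by
        gcongr
  _ = 16 * τ^(2*a+2) * (C * T ^ (-(2*b)) + K * τ ^ (-(gam a)) * T ^ (gam a - 2*b)) := by
        have e5 : T ^ (2*b) = T^(2:ℕ) * T ^ (2*b-2) := by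
          rw [← Real.rpow_natCast T 2, ← Real.rpow_add hT0]
          congr 1
          push_cast
          try ring_nf
        have e6 : T ^ (gam a - 2*b) = T ^ gam a * T ^ (-(2*b)) := by
          rw [← Real.rpow_add hT0]
          congr 1
          try ring
        have e7 : T ^ (-(2*b)) = (T ^ (2*b))⁻¹ := Real.rpow_neg hT0.le _
        have hW : T ^ (2*b-2) ≠ 0 := ne_of_gt (Real.rpow_pos_of_pos hT0 _)
        have hT0' : T ≠ 0 := ne_of_gt hT0
        rw [e6, e7, e5]
        field_simp
        ring

/-- The universal long-trajectory limit of the ergodicity breaking parameter for the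
SBMRE with two-point distributed exponent: `EB(T) → p/(1−p)` as `T → ∞`. -/
theorem sbmre_two_point_EB_limit (A₁ A₂ p τ : ℝ)
    (hA1 : 0 < A₁) (hA12 : A₁ < A₂) (hp : p ∈ Set.Ioo (0:ℝ) 1) (hτ : 0 < τ) :
    Tendsto (fun T : ℝ => sbmreTwoPointEB A₁ A₂ p τ T) atTop (nhds (p / (1 - p))) := by
  obtain ⟨hp0, hp1⟩ := hp
  have hA2 : 0 < A₂ := lt_trans hA1 hA12
  have hγ1 : gam A₁ < 2*A₂ := by
    simp only [gam, max_lt_iff]; constructor <;> linarith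
  have hγ2 : gam A₂ < 2*A₂ := by
    simp only [gam, max_lt_iff]; constructor <;> linarith
  have hv1 := var_div_tendsto A₁ A₂ τ hA1 hA2 hγ1 hτ
  have hv2 := var_div_tendsto A₂ A₂ τ hA2 hA2 hγ2 hτ
  have he2 := tamsd_div_tendsto A₂ τ hA2 hτ
  have he1 : Tendsto (fun T : ℝ => sbmTamsd τ A₁ T / T ^ (A₂-1)) atTop (nhds 0) := by
    have h0 := tamsd_div_tendsto A₁ τ hA1 hτ
    have hz : Tendsto (fun T : ℝ => T ^ (A₁ - A₂)) atTop (nhds 0) := by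
      have := tendsto_rpow_neg_atTop (y := A₂ - A₁) (by linarith)
      apply this.congr
      intro T
      congr 1
      ring
    have h1 := h0.mul hz
    rw [show τ * 0 = 0 by ring] at h1
    apply h1.congr'
    filter_upwards [eventually_ge_atTop 1] with T hT
    have hT0 : (0:ℝ) < T := by linarith
    have e : T ^ (A₁-1) = T ^ (A₂-1) * T ^ (A₁-A₂) := by
      rw [← Real.rpow_add hT0]
      congr 1
      try ring
    have hne1 : T ^ (A₂-1) ≠ 0 := ne_of_gt (Real.rpow_pos_of_pos hT0 _)
    have hne2 : T ^ (A₁-A₂) ≠ 0 := ne_of_gt (Real.rpow_pos_of_pos hT0 _)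
    rw [e]
    field_simp
  have hd : Tendsto (fun T : ℝ =>
      (p * sbmTamsd τ A₁ T + (1-p) * sbmTamsd τ A₂ T) / T ^ (A₂-1))
      atTop (nhds ((1-p)*τ)) := by
    have h := (he1.const_mul p).add (he2.const_mul (1-p))
    rw [show p * 0 + (1-p) * τ = (1-p)*τ by ring] at h
    apply h.congr
    intro T
    ring
  have hdiff : Tendsto (fun T : ℝ =>
      (sbmTamsd τ A₁ T - sbmTamsd τ A₂ T) / T ^ (A₂-1)) atTop (nhds (-τ)) := by
    have h := he1.sub he2
    rw [show (0:ℝ) - τ = -τ by ring] at h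
    apply h.congr
    intro T
    ring
  have hnum : Tendsto (fun T : ℝ =>
      (p * sbmTamsdVar τ A₁ T + (1-p) * sbmTamsdVar τ A₂ T
        + p * (1-p) * (sbmTamsd τ A₁ T - sbmTamsd τ A₂ T)^2) / T ^ (2*A₂-2))
      atTop (nhds (p * (1-p) * τ^2)) := by
    have h := ((hv1.const_mul p).add (hv2.const_mul (1-p))).add
      ((hdiff.mul hdiff).const_mul (p*(1-p)))
    rw [show p * 0 + (1-p) * 0 + p*(1-p) * (-τ * -τ) = p*(1-p)*τ^2 by ring] at h
    apply h.congr'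
    filter_upwards [eventually_ge_atTop 1] with T hT
    have hT0 : (0:ℝ) < T := by linarith
    have hs : T ^ (2*A₂-2) = (T ^ (A₂-1))^(2:ℕ) := by
      rw [← Real.rpow_natCast (T ^ (A₂-1)) 2, ← Real.rpow_mul hT0.le]
      congr 1
      push_cast
      ring
    have hne1 : T ^ (A₂-1) ≠ 0 := ne_of_gt (Real.rpow_pos_of_pos hT0 _)
    rw [hs]
    field_simp
  have hden : Tendsto (fun T : ℝ =>
      (p * sbmTamsd τ A₁ T + (1-p) * sbmTamsd τ A₂ T)^2 / T ^ (2*A₂-2))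
      atTop (nhds (((1-p)*τ) * ((1-p)*τ))) := by
    have h := hd.mul hd
    apply h.congr'
    filter_upwards [eventually_ge_atTop 1] with T hT
    have hT0 : (0:ℝ) < T := by linarith
    have hs : T ^ (2*A₂-2) = (T ^ (A₂-1))^(2:ℕ) := by
      rw [← Real.rpow_natCast (T ^ (A₂-1)) 2, ← Real.rpow_mul hT0.le]
      congr 1
      push_cast
      ring
    have hne1 : T ^ (A₂-1) ≠ 0 := ne_of_gt (Real.rpow_pos_of_pos hT0 _)
    rw [hs]
    field_simp
  have h1p : (0:ℝ) < 1 - p := by linarith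
  have hne : ((1-p)*τ) * ((1-p)*τ) ≠ 0 := by positivity
  have hfin := hnum.div hden hne
  have hval : p * (1-p) * τ^2 / (((1-p)*τ) * ((1-p)*τ)) = p / (1-p) := by
    have h1 : (1:ℝ) - p ≠ 0 := by linarith
    have h2 : τ ≠ 0 := ne_of_gt hτ
    field_simp
  rw [hval] at hfin
  apply hfin.congr'
  filter_upwards [eventually_ge_atTop 1] with T hT
  have hT0 : (0:ℝ) < T := by linarith
  have hne1 : T ^ (2*A₂-2) ≠ 0 := ne_of_gt (Real.rpow_pos_of_pos hT0 _)
  simp only [sbmreTwoPointEB, Pi.div_apply]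
  rw [div_div_div_comm, div_self hne1, div_one]
end

section
/- Fix 0 < A₁ < A₂ and γ, β > 0, and define I(t) = (1 / (B(γ,β) · (A₂−A₁)^{γ+β−1})) · ∫_{A₁}^{A₂} t^a · (a−A₁)^{γ−1} · (A₂−a)^{β−1} da for t > 0, where B(γ,β) is the Beta function (this is E[t^A] = E[X(t)²], the second moment of SBMRE with exponent A Beta-distributed on [A₁, A₂]). Then as t → ∞, I(t) ~ Γ(γ+β) · t^{A₂} / ( Γ(γ) · ((A₂−A₁)·log t)^{β} ); that is, lim_{t→∞} I(t) · Γ(γ) · ((A₂−A₁) log t)^{β} / ( Γ(γ+β) · t^{A₂} ) = 1. -/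
open MeasureTheory ProbabilityTheory Filter Real

/-- The Beta function `B(γ, β) = Γ(γ)Γ(β)/Γ(γ+β)`. -/
noncomputable def betaFun (γ β : ℝ) : ℝ :=
  Real.Gamma γ * Real.Gamma β / Real.Gamma (γ + β)

/-- The second moment `E[t^A] = E[X(t)²]` of the SBMRE whose exponent `A` is
Beta-distributed on `[A₁, A₂]` with parameters `γ, β`. -/
noncomputable def sbmreBetaSecondMoment (A₁ A₂ γ β t : ℝ) : ℝ :=
  (1 / (betaFun γ β * (A₂ - A₁) ^ (γ + β - 1))) *
    ∫ a in A₁..A₂, t ^ a * (a - A₁) ^ (γ - 1) * (A₂ - a) ^ (β - 1)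


private lemma sbmre_aux_int1 (L γ β x : ℝ) (hL : 0 < L) (hβ : 0 < β) :
    IntervalIntegrable (fun u => Real.exp (-(x*u)) * u ^ (β-1) * (L-u) ^ (γ-1))
      volume 0 (L/2) := by
  have h1 : IntervalIntegrable (fun u : ℝ => u ^ (β-1)) volume 0 (L/2) :=
    intervalIntegral.intervalIntegrable_rpow' (by linarith)
  have h2 : ContinuousOn (fun u : ℝ => Real.exp (-(x*u))) (Set.uIcc 0 (L/2)) :=
    (Real.continuous_exp.comp (continuous_const.mul continuous_id).neg).continuousOn
  have h3 : ContinuousOn (fun u : ℝ => (L-u) ^ (γ-1)) (Set.uIcc 0 (L/2)) := by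
    apply (continuousOn_const.sub continuousOn_id).rpow_const
    intro u hu
    rw [Set.uIcc_of_le (by positivity)] at hu
    have : u ≤ L/2 := hu.2
    left; intro h; simp only [Pi.sub_apply, id] at h; nlinarith
  exact (h1.continuousOn_mul h2).mul_continuousOn h3

private lemma sbmre_aux_int2 (L γ β x : ℝ) (hL : 0 < L) (hγ : 0 < γ) :
    IntervalIntegrable (fun u => Real.exp (-(x*u)) * u ^ (β-1) * (L-u) ^ (γ-1))
      volume (L/2) L := by
  have h1 : IntervalIntegrable (fun u : ℝ => (L-u) ^ (γ-1)) volume (L/2) L := by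
    have := (intervalIntegral.intervalIntegrable_rpow' (r := γ-1) (a := L/2) (b := 0)
      (by linarith)).comp_sub_left L
    rw [show L - L/2 = L/2 by ring] at this; simpa using this
  have h2 : ContinuousOn (fun u : ℝ => Real.exp (-(x*u)) * u ^ (β-1))
      (Set.uIcc (L/2) L) := by
    apply ((Real.continuous_exp.comp (continuous_const.mul continuous_id).neg).continuousOn).mul
    apply continuousOn_id.rpow_const
    intro u hu
    rw [Set.uIcc_of_le (by linarith)] at hu
    left; simp only [id]; intro h; rw [h] at hu; have := hu.1; linarith
  exact h1.continuousOn_mul h2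

private lemma sbmre_aux_int0 (L γ β : ℝ) (hL : 0 < L) (hγ : 0 < γ) :
    IntervalIntegrable (fun u => u ^ (β-1) * (L-u) ^ (γ-1)) volume (L/2) L := by
  have h1 : IntervalIntegrable (fun u : ℝ => (L-u) ^ (γ-1)) volume (L/2) L := by
    have := (intervalIntegral.intervalIntegrable_rpow' (r := γ-1) (a := L/2) (b := 0)
      (by linarith)).comp_sub_left L
    rw [show L - L/2 = L/2 by ring] at this; simpa using this
  have h2 : ContinuousOn (fun u : ℝ => u ^ (β-1)) (Set.uIcc (L/2) L) := by
    apply continuousOn_id.rpow_const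
    intro u hu
    rw [Set.uIcc_of_le (by linarith)] at hu
    left; simp only [id]; intro h; rw [h] at hu; have := hu.1; linarith
  exact h1.continuousOn_mul h2

private lemma sbmre_aux_tail (L γ β : ℝ) (hL : 0 < L) (hγ : 0 < γ) (hβ : 0 < β) :
    Tendsto (fun x : ℝ => x ^ β *
        ∫ u in (L/2)..L, Real.exp (-(x*u)) * u ^ (β-1) * (L-u) ^ (γ-1))
      atTop (nhds 0) := by
  set C : ℝ := ∫ u in (L/2)..L, u ^ (β-1) * (L-u) ^ (γ-1) with hC
  have hCnn : 0 ≤ C := by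
    apply intervalIntegral.integral_nonneg (by linarith)
    intro u hu
    have h1 : (0:ℝ) ≤ u := by have := hu.1; linarith
    have h2 : (0:ℝ) ≤ L - u := by have := hu.2; linarith
    positivity
  have key : ∀ x : ℝ, 0 ≤ x →
      (0 ≤ x ^ β * ∫ u in (L/2)..L, Real.exp (-(x*u)) * u ^ (β-1) * (L-u) ^ (γ-1)) ∧
      (x ^ β * ∫ u in (L/2)..L, Real.exp (-(x*u)) * u ^ (β-1) * (L-u) ^ (γ-1)
        ≤ x ^ β * Real.exp (-(L/2) * x) * C) := by
    intro x hx
    have hnn : 0 ≤ ∫ u in (L/2)..L, Real.exp (-(x*u)) * u ^ (β-1) * (L-u) ^ (γ-1) := by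
      apply intervalIntegral.integral_nonneg (by linarith)
      intro u hu
      have h1 : (0:ℝ) ≤ u := by have := hu.1; linarith
      have h2 : (0:ℝ) ≤ L - u := by have := hu.2; linarith
      positivity
    constructor
    · positivity
    · rw [mul_assoc]
      apply mul_le_mul_of_nonneg_left _ (by positivity : (0:ℝ) ≤ x ^ β)
      have : Real.exp (-(L/2)*x) * C
          = ∫ u in (L/2)..L, Real.exp (-(L/2)*x) * (u ^ (β-1) * (L-u) ^ (γ-1)) := by
        rw [intervalIntegral.integral_const_mul]
      rw [this]
      apply intervalIntegral.integral_mono_on (by linarith)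
        (sbmre_aux_int2 L γ β x hL hγ)
        ((sbmre_aux_int0 L γ β hL hγ).const_mul _)
      intro u hu
      have h1 : (0:ℝ) ≤ u := by have := hu.1; linarith
      have h2 : (0:ℝ) ≤ L - u := by have := hu.2; linarith
      have h3 : Real.exp (-(x*u)) ≤ Real.exp (-(L/2)*x) := by
        apply Real.exp_le_exp.2
        have := hu.1
        nlinarith
      rw [mul_assoc]
      exact mul_le_mul_of_nonneg_right h3 (by positivity) |>.trans_eq rfl
  have hlim : Tendsto (fun x : ℝ => x ^ β * Real.exp (-(L/2) * x) * C) atTop (nhds 0) := by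
    have := (tendsto_rpow_mul_exp_neg_mul_atTop_nhds_zero β (L/2) (by linarith)).mul_const C
    simpa using this
  apply squeeze_zero' ?_ ?_ hlim
  · filter_upwards [eventually_ge_atTop (0:ℝ)] with x hx using (key x hx).1
  · filter_upwards [eventually_ge_atTop (0:ℝ)] with x hx using (key x hx).2

private lemma sbmre_aux_dct (L γ β : ℝ) (hL : 0 < L) (hγ : 0 < γ) (hβ : 0 < β) :
    Tendsto (fun x : ℝ => ∫ s in Set.Ioi (0:ℝ),
        Set.indicator (Set.Ioc 0 (x*(L/2)))
          (fun s : ℝ => Real.exp (-s) * s ^ (β-1) * (L - s/x) ^ (γ-1)) s)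
      atTop (nhds (Real.Gamma β * L ^ (γ-1))) := by
  set M : ℝ := max (L ^ (γ-1)) ((L/2) ^ (γ-1)) with hM
  have hlimval : (Real.Gamma β * L ^ (γ-1))
      = ∫ s in Set.Ioi (0:ℝ), Real.exp (-s) * s ^ (β-1) * L ^ (γ-1) := by
    rw [MeasureTheory.integral_mul_const, ← Real.Gamma_eq_integral hβ]
  rw [hlimval]
  apply MeasureTheory.tendsto_integral_filter_of_dominated_convergence
    (fun s : ℝ => Real.exp (-s) * s ^ (β-1) * M)
  · filter_upwards with x
    apply Measurable.aestronglyMeasurable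
    apply Measurable.indicator _ measurableSet_Ioc
    fun_prop
  · filter_upwards [eventually_gt_atTop (0:ℝ)] with x hx
    refine Filter.eventually_of_mem (self_mem_ae_restrict measurableSet_Ioi) ?_
    intro s hs
    have hs0 : (0:ℝ) < s := hs
    by_cases hmem : s ∈ Set.Ioc 0 (x*(L/2))
    · rw [Set.indicator_of_mem hmem]
      have hsx : s / x ≤ L/2 := by
        rw [div_le_iff₀ hx]
        calc s ≤ x*(L/2) := hmem.2
        _ = L/2 * x := by ring
      have hbase1 : L/2 ≤ L - s/x := by linarith
      have hbase0 : 0 < L - s/x := by linarith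
      have hbaseL : L - s/x ≤ L := by
        have : 0 ≤ s / x := by positivity
        linarith
      have hMb : (L - s/x) ^ (γ-1) ≤ M := by
        rcases le_or_gt 1 γ with h | h
        · exact le_trans (Real.rpow_le_rpow hbase0.le hbaseL (by linarith))
            (le_max_left _ _)
        · exact le_trans (Real.rpow_le_rpow_of_nonpos (by linarith) hbase1 (by linarith))
            (le_max_right _ _)
      rw [Real.norm_eq_abs, abs_of_nonneg (by positivity)]
      exact mul_le_mul_of_nonneg_left hMb (by positivity)
    · rw [Set.indicator_of_notMem hmem]
      have hMnn : 0 ≤ M := le_trans (Real.rpow_nonneg hL.le _) (le_max_left _ _)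
      simp only [norm_zero]
      positivity
  · exact (Real.GammaIntegral_convergent hβ).mul_const M
  · refine Filter.eventually_of_mem (self_mem_ae_restrict measurableSet_Ioi) ?_
    intro s hs
    have hs0 : (0:ℝ) < s := hs
    have hev : ∀ᶠ x : ℝ in atTop,
        Real.exp (-s) * s ^ (β-1) * (L - s/x) ^ (γ-1)
        = Set.indicator (Set.Ioc 0 (x*(L/2)))
          (fun s : ℝ => Real.exp (-s) * s ^ (β-1) * (L - s/x) ^ (γ-1)) s := by
      filter_upwards [eventually_ge_atTop (2*s/L)] with x hx
      have hmem : s ∈ Set.Ioc 0 (x*(L/2)) := by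
        constructor
        · exact hs0
        · rw [div_le_iff₀ hL] at hx
          nlinarith
      rw [Set.indicator_of_mem hmem]
    apply Filter.Tendsto.congr' hev
    have h1 : Tendsto (fun x : ℝ => L - s/x) atTop (nhds L) := by
      have := Filter.Tendsto.div_atTop (tendsto_const_nhds (x := s)) tendsto_id
      simpa using tendsto_const_nhds.sub this
    have h2 : Tendsto (fun x : ℝ => (L - s/x) ^ (γ-1)) atTop (nhds (L ^ (γ-1))) :=
      ((Real.continuousAt_rpow_const L (γ-1) (Or.inl hL.ne')).tendsto).comp h1
    exact h2.const_mul _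

private lemma sbmre_aux_main (L γ β : ℝ) (hL : 0 < L) (hγ : 0 < γ) (hβ : 0 < β) :
    Tendsto (fun x : ℝ => x ^ β *
        ∫ u in (0:ℝ)..(L/2), Real.exp (-(x*u)) * u ^ (β-1) * (L-u) ^ (γ-1))
      atTop (nhds (Real.Gamma β * L ^ (γ-1))) := by
  apply (sbmre_aux_dct L γ β hL hγ hβ).congr'
  filter_upwards [eventually_gt_atTop (0:ℝ)] with x hx
  have hx0 : x ≠ 0 := hx.ne'
  have step1 : ∫ s in Set.Ioi (0:ℝ),
      Set.indicator (Set.Ioc 0 (x*(L/2)))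
        (fun s : ℝ => Real.exp (-s) * s ^ (β-1) * (L - s/x) ^ (γ-1)) s
      = ∫ s in (0:ℝ)..(x*(L/2)), Real.exp (-s) * s ^ (β-1) * (L - s/x) ^ (γ-1) := by
    rw [MeasureTheory.integral_indicator measurableSet_Ioc,
      Measure.restrict_restrict measurableSet_Ioc,
      Set.inter_eq_left.mpr Set.Ioc_subset_Ioi_self,
      intervalIntegral.integral_of_le (by positivity)]
  have step2 : ∫ s in (0:ℝ)..(x*(L/2)), Real.exp (-s) * s ^ (β-1) * (L - s/x) ^ (γ-1)
      = x • ∫ u in (0:ℝ)..(L/2),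
          Real.exp (-(x*u)) * (x*u) ^ (β-1) * (L - (x*u)/x) ^ (γ-1) := by
    rw [intervalIntegral.smul_integral_comp_mul_left
      (fun s : ℝ => Real.exp (-s) * s ^ (β-1) * (L - s/x) ^ (γ-1)) x, mul_zero]
  have step3 : ∫ u in (0:ℝ)..(L/2),
        Real.exp (-(x*u)) * (x*u) ^ (β-1) * (L - (x*u)/x) ^ (γ-1)
      = x ^ (β-1) * ∫ u in (0:ℝ)..(L/2),
          Real.exp (-(x*u)) * u ^ (β-1) * (L - u) ^ (γ-1) := by
    rw [← intervalIntegral.integral_const_mul]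
    apply intervalIntegral.integral_congr
    intro u hu
    rw [Set.uIcc_of_le (by positivity)] at hu
    have hu0 : 0 ≤ u := hu.1
    simp only []
    rw [mul_div_cancel_left₀ u hx0, Real.mul_rpow hx.le hu0]
    ring
  rw [step1, step2, step3, smul_eq_mul, ← mul_assoc]
  congr 1
  rw [← Real.rpow_one_add' hx.le (by intro h; exact hβ.ne' (by linarith))]
  ring_nf

private lemma sbmre_aux_G (L γ β : ℝ) (hL : 0 < L) (hγ : 0 < γ) (hβ : 0 < β) :
    Tendsto (fun x : ℝ => x ^ β *
        ∫ u in (0:ℝ)..L, Real.exp (-(x*u)) * u ^ (β-1) * (L-u) ^ (γ-1))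
      atTop (nhds (Real.Gamma β * L ^ (γ-1))) := by
  have heq : ∀ x : ℝ,
      x ^ β * ∫ u in (0:ℝ)..L, Real.exp (-(x*u)) * u ^ (β-1) * (L-u) ^ (γ-1)
      = (x ^ β * ∫ u in (0:ℝ)..(L/2), Real.exp (-(x*u)) * u ^ (β-1) * (L-u) ^ (γ-1))
        + (x ^ β * ∫ u in (L/2)..L, Real.exp (-(x*u)) * u ^ (β-1) * (L-u) ^ (γ-1)) := by
    intro x
    rw [← mul_add, intervalIntegral.integral_add_adjacent_intervals
      (sbmre_aux_int1 L γ β x hL hβ) (sbmre_aux_int2 L γ β x hL hγ)]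
  simp only [heq]
  have := (sbmre_aux_main L γ β hL hγ hβ).add (sbmre_aux_tail L γ β hL hγ hβ)
  simpa using this

/-- Long-time asymptotics of the second moment of the SBMRE with Beta-distributed
exponent: as `t → ∞`,
`I(t) ~ Γ(γ+β) t^{A₂} / (Γ(γ) ((A₂−A₁) log t)^β)`. -/
theorem sbmre_beta_second_moment_asymptotics_long (A₁ A₂ γ β : ℝ)
    (hA1 : 0 < A₁) (hA12 : A₁ < A₂) (hγ : 0 < γ) (hβ : 0 < β) :
    Tendsto (fun t : ℝ =>
        sbmreBetaSecondMoment A₁ A₂ γ β t * Real.Gamma γ *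
          ((A₂ - A₁) * Real.log t) ^ β / (Real.Gamma (γ + β) * t ^ A₂))
      atTop (nhds 1) := by
  set L : ℝ := A₂ - A₁ with hLdef
  have hL : 0 < L := sub_pos.mpr hA12
  have hGg : 0 < Real.Gamma γ := Real.Gamma_pos_of_pos hγ
  have hGb : 0 < Real.Gamma β := Real.Gamma_pos_of_pos hβ
  have hGab : 0 < Real.Gamma (γ+β) := Real.Gamma_pos_of_pos (by linarith)
  set K : ℝ := 1 / (Real.Gamma β * L ^ (γ-1)) with hK
  have hlim : Tendsto (fun t : ℝ => K * ((Real.log t) ^ β *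
      ∫ u in (0:ℝ)..L, Real.exp (-(Real.log t * u)) * u ^ (β-1) * (L-u) ^ (γ-1)))
      atTop (nhds 1) := by
    have h := ((sbmre_aux_G L γ β hL hγ hβ).comp Real.tendsto_log_atTop).const_mul K
    have hone : K * (Real.Gamma β * L ^ (γ-1)) = 1 := by
      rw [hK]
      have h1 : L ^ (γ-1) ≠ 0 := (Real.rpow_pos_of_pos hL _).ne'
      field_simp
    rw [hone] at h
    simpa [Function.comp] using h
  refine Filter.Tendsto.congr' ?_ hlim
  filter_upwards [eventually_gt_atTop (1:ℝ)] with t ht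
  have ht0 : (0:ℝ) < t := by linarith
  have hlt : 0 < Real.log t := Real.log_pos ht
  have hta : 0 < t ^ A₂ := Real.rpow_pos_of_pos ht0 _
  have hint : (∫ a in A₁..A₂, t^a * (a-A₁)^(γ-1) * (A₂-a)^(β-1))
      = t^A₂ * ∫ u in (0:ℝ)..L, Real.exp (-(Real.log t * u)) * u^(β-1) * (L-u)^(γ-1) := by
    have h1 := intervalIntegral.integral_comp_sub_left (a := 0) (b := L)
        (fun a => t^a * (a-A₁)^(γ-1) * (A₂-a)^(β-1)) A₂
    rw [show A₂ - L = A₁ by rw [hLdef]; ring, sub_zero] at h1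
    rw [← h1, ← intervalIntegral.integral_const_mul]
    apply intervalIntegral.integral_congr
    intro u hu
    simp only []
    have e1 : t ^ (A₂ - u) = t ^ A₂ * Real.exp (-(Real.log t * u)) := by
      rw [Real.rpow_def_of_pos ht0, Real.rpow_def_of_pos ht0, ← Real.exp_add]
      ring_nf
    have e2 : A₂ - u - A₁ = L - u := by rw [hLdef]; ring
    have e3 : A₂ - (A₂ - u) = u := by ring
    rw [e1, e2, e3]; ring
  rw [sbmreBetaSecondMoment, betaFun, ← hLdef, hint]
  rw [Real.mul_rpow hL.le hlt.le]
  rw [show γ + β - 1 = (γ-1) + β by ring, Real.rpow_add hL]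
  set J : ℝ := ∫ u in (0:ℝ)..L, Real.exp (-(Real.log t * u)) * u^(β-1) * (L-u)^(γ-1)
  have h1 : L ^ (γ-1) ≠ 0 := (Real.rpow_pos_of_pos hL _).ne'
  have h2 : L ^ (β:ℝ) ≠ 0 := (Real.rpow_pos_of_pos hL _).ne'
  rw [hK]
  field_simp
end
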